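/- arXiv:1509.08415 — 6 statements merged into one kernel-verified Lean document; each statement's English description precedes it below -/
import Mathlib

section
/- Let X be a compact metric space and F : X → 2^X an upper semi-continuous set-valued mapping. If F has the specification property, then F is topologically mixing: for any nonempty open sets U, V ⊆ X there exists M ∈ ℕ such that for every m > M there is a point x ∈ U with an orbit (x_j)_{j≥0} of F satisfying x_m ∈ V. -/
/-- An orbit of a set-valued map `F`: a sequence with `x (j+1) ∈ F (x j)`. -/
def IsOrbit {X : Type*} (F : X → Set X) (o : ℕ → X) : Prop :=
  ∀ j : ℕ, o (j + 1) ∈ F (o j)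

/-- `M` witnesses the specification property of `F` for the tolerance `ε`. -/
def SpecWith {X : Type*} [MetricSpace X] (F : X → Set X) (ε : ℝ) (M : ℕ) : Prop :=
  ∀ (n : ℕ) (o : Fin (n + 1) → ℕ → X) (a b : Fin (n + 1) → ℕ),
    (∀ i, IsOrbit F (o i)) →
    (∀ i, a i ≤ b i) →
    (∀ i : Fin n, b i.castSucc + M < a i.succ) →
    ∀ P : ℕ, M + b (Fin.last n) - a 0 < P →
      ∃ z : ℕ → X, IsOrbit F z ∧ z P = z 0 ∧
        ∀ i : Fin (n + 1), ∀ j : ℕ, a i ≤ j → j ≤ b i → dist (z j) (o i j) < ε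

/-- The specification property for a set-valued map. -/
def Specification {X : Type*} [MetricSpace X] (F : X → Set X) : Prop :=
  ∀ ε : ℝ, 0 < ε → ∃ M : ℕ, SpecWith F ε M

/-- Upper semi-continuity of a set-valued map. -/
def UpperSemiContinuousSV {X : Type*} [MetricSpace X] (F : X → Set X) : Prop :=
  ∀ x : X, ∀ V : Set X, IsOpen V → F x ⊆ V →
    ∃ U : Set X, IsOpen U ∧ x ∈ U ∧ ∀ y ∈ U, F y ⊆ V

/-- A choice orbit through any point, when all values of `F` are nonempty. -/
noncomputable def selOrbit {X : Type*} (F : X → Set X) (h : ∀ x, (F x).Nonempty) (x : X) :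
    ℕ → X :=
  fun n => (fun y => (h y).choose)^[n] x

lemma selOrbit_isOrbit {X : Type*} (F : X → Set X) (h : ∀ x, (F x).Nonempty) (x : X) :
    IsOrbit F (selOrbit F h x) := by
  intro j
  simp only [selOrbit, Function.iterate_succ_apply']
  exact (h _).choose_spec

lemma selOrbit_zero {X : Type*} (F : X → Set X) (h : ∀ x, (F x).Nonempty) (x : X) :
    selOrbit F h x 0 = x := rfl

/-- specification implies topological mixing. -/
theorem specification_implies_mixing {X : Type*} [MetricSpace X] [CompactSpace X]
    (F : X → Set X) (hvals : ∀ x, (F x).Nonempty ∧ IsClosed (F x))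
    (husc : UpperSemiContinuousSV F) (hspec : Specification F) :
    ∀ U V : Set X, IsOpen U → IsOpen V → U.Nonempty → V.Nonempty →
      ∃ M : ℕ, ∀ m : ℕ, M < m →
        ∃ x ∈ U, ∃ o : ℕ → X, o 0 = x ∧ IsOrbit F o ∧ o m ∈ V := by
  rintro U V hU hV ⟨u, hu⟩ ⟨v, hv⟩
  obtain ⟨ε1, hε1, hball1⟩ := Metric.isOpen_iff.mp hU u hu
  obtain ⟨ε2, hε2, hball2⟩ := Metric.isOpen_iff.mp hV v hv
  set ε : ℝ := min ε1 ε2 / 2 with hεdef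
  have hε : 0 < ε := by positivity
  obtain ⟨M, hM⟩ := hspec ε hε
  have hne : ∀ x, (F x).Nonempty := fun x => (hvals x).1
  refine ⟨M, fun m hm => ?_⟩
  -- First application: periodic orbit near v with period m.
  obtain ⟨z, hzorb, hzper, hzclose⟩ :=
    hM 0 (fun _ => selOrbit F hne v) (fun _ => 0) (fun _ => 0)
      (fun _ => selOrbit_isOrbit F hne v) (fun _ => le_rfl) (fun i => i.elim0)
      m (by simpa using hm)
  have hz0 : dist (z 0) v < ε := by
    have := hzclose 0 0 le_rfl le_rfl
    simpa [selOrbit_zero] using this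
  -- Second application: shadow orbit of u on [0,0] and z on [m,m].
  obtain ⟨w, hworb, -, hwclose⟩ :=
    hM 1 ![selOrbit F hne u, z] ![0, m] ![0, m]
      (by
        intro i
        fin_cases i
        · exact selOrbit_isOrbit F hne u
        · exact hzorb)
      (by intro i; fin_cases i <;> simp)
      (by
        intro i
        fin_cases i
        simpa using hm)
      (M + m + 1)
      (by simp [Fin.last])
  have hw0 : dist (w 0) u < ε := by
    have := hwclose 0 0 le_rfl le_rfl
    simpa [selOrbit_zero] using this
  have hwm : dist (w m) (z m) < ε := by
    have := hwclose 1 m le_rfl le_rfl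
    simpa using this
  refine ⟨w 0, ?_, w, rfl, hworb, ?_⟩
  · apply hball1
    have : ε ≤ ε1 := by
      have := min_le_left ε1 ε2
      simp only [hεdef]; linarith
    exact Metric.mem_ball.mpr (lt_of_lt_of_le hw0 this)
  · apply hball2
    have h2 : dist (w m) v < 2 * ε := by
      calc dist (w m) v ≤ dist (w m) (z m) + dist (z m) v := dist_triangle _ _ _
        _ = dist (w m) (z m) + dist (z 0) v := by rw [hzper]
        _ < ε + ε := add_lt_add hwm hz0
        _ = 2 * ε := by ring
    have : 2 * ε ≤ ε2 := by
      have := min_le_right ε1 ε2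
      simp only [hεdef]; linarith
    exact Metric.mem_ball.mpr (lt_of_lt_of_le h2 this)
end

section
/- Let X be a compact connected metric space and F : X → 2^X a set-valued mapping that has shadowing and a dense set of points each having at least one periodic orbit. Then F satisfies the weak specification property: for every ε > 0 there exists M ∈ ℕ such that for any x^1,…,x^n ∈ X, any a_1 ≤ b_1 < a_2 ≤ b_2 < … < a_n ≤ b_n with a_{i+1} − b_i > M, and any orbits (x^i_j)_{j≥0} of the x^i, there is a point z ∈ X with an orbit (z_j)_{j≥0} such that d(z_j, x^i_j) < ε for all 1 ≤ i ≤ n and a_i ≤ j ≤ b_i. -/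
/-- `(x_i)` is a `δ`-pseudo-orbit: `d(F(x_i), x_{i+1}) < δ`. -/
def IsPseudoOrbit {X : Type*} [MetricSpace X] (F : X → Set X) (δ : ℝ) (x : ℕ → X) : Prop :=
  ∀ i : ℕ, Metric.infDist (x (i + 1)) (F (x i)) < δ

/-- `F` has the shadowing property. -/
def Shadowing {X : Type*} [MetricSpace X] (F : X → Set X) : Prop :=
  ∀ ε : ℝ, 0 < ε → ∃ δ : ℝ, 0 < δ ∧
    ∀ x : ℕ → X, IsPseudoOrbit F δ x →
      ∃ z : ℕ → X, IsOrbit F z ∧ ∀ i : ℕ, dist (z i) (x i) < ε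


open Metric

/-- A chain of length `L` from `p` to `q` for the step relation `R`. -/
def RJoin {X : Type*} (R : X → X → Prop) (p q : X) (L : ℕ) : Prop :=
  ∃ u : ℕ → X, u 0 = p ∧ u L = q ∧ ∀ k < L, R (u k) (u (k + 1))

namespace RJoin

variable {X : Type*} {R : X → X → Prop} {p q s : X} {L L' : ℕ}

lemma refl (p : X) : RJoin R p p 0 :=
  ⟨fun _ => p, rfl, rfl, fun k hk => absurd hk (Nat.not_lt_zero k)⟩

lemma single (h : R p q) : RJoin R p q 1 := by
  refine ⟨fun k => if k = 0 then p else q, by simp, by simp, ?_⟩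
  intro k hk
  interval_cases k
  simpa using h

lemma trans (h1 : RJoin R p q L) (h2 : RJoin R q s L') : RJoin R p s (L + L') := by
  obtain ⟨u, hu0, huL, hu⟩ := h1
  obtain ⟨v, hv0, hvL, hv⟩ := h2
  refine ⟨fun k => if k < L then u k else v (k - L), ?_, ?_, ?_⟩
  · rcases Nat.eq_zero_or_pos L with h | h
    · subst h; simp [← hu0, ← huL, hv0]
    · simp [h, hu0]
  · rcases Nat.eq_zero_or_pos L' with h | h
    · subst h
      simp only [Nat.add_zero, if_neg (lt_irrefl L), Nat.sub_self, hv0, ← hvL]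
    · have : ¬ (L + L' < L) := by omega
      simp [this, Nat.add_sub_cancel_left, hvL]
  · intro k hk
    rcases lt_trichotomy (k + 1) L with h | h | h
    · have hkL : k < L := by omega
      simp only [if_pos h, if_pos hkL]
      exact hu k hkL
    · have hkL : k < L := by omega
      have e1 : k + 1 - L = 0 := by omega
      show R (if k < L then u k else v (k - L)) (if k + 1 < L then u (k + 1) else v (k + 1 - L))
      rw [if_pos hkL, if_neg (by omega : ¬ (k + 1 < L)), e1, hv0, ← huL, ← h]
      exact hu k hkL
    · have hkL : ¬ (k < L) := by omega
      have h1 : ¬ (k + 1 < L) := by omega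
      simp only [if_neg hkL, if_neg h1]
      have : k + 1 - L = (k - L) + 1 := by omega
      rw [this]
      exact hv (k - L) (by omega)

lemma symm (hsymm : ∀ x y, R x y → R y x) (h : RJoin R p q L) : RJoin R q p L := by
  obtain ⟨u, hu0, huL, hu⟩ := h
  refine ⟨fun k => u (L - k), by simp [huL], by simp [hu0], ?_⟩
  intro k hk
  have h1 : L - k = (L - (k + 1)) + 1 := by omega
  show R (u (L - k)) (u (L - (k+1)))
  rw [h1]
  exact hsymm _ _ (hu (L - (k + 1)) (by omega))

end RJoin

section FStep

variable {X : Type*} [MetricSpace X] {F : X → Set X} {δ : ℝ}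

/-- The step relation for `δ`-pseudo-orbits. -/
def FStep (F : X → Set X) (δ : ℝ) (x y : X) : Prop := infDist y (F x) < δ

lemma orbit_rjoin (hδ : 0 < δ) {o : ℕ → X} (ho : IsOrbit F o) (j L : ℕ) :
    RJoin (FStep F δ) (o j) (o (j + L)) L := by
  refine ⟨fun k => o (j + k), by simp, rfl, ?_⟩
  intro k hk
  show infDist (o (j + (k + 1))) (F (o (j + k))) < δ
  rw [show j + (k + 1) = (j + k) + 1 by ring, infDist_zero_of_mem (ho (j + k))]
  exact hδ

/-- Hop from a periodic point `o 0` to any point within `δ` of it, in exactly `π` steps. -/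
lemma periodic_hop (hδ : 0 < δ) {o : ℕ → X} (ho : IsOrbit F o)
    {π : ℕ} (hπ : 0 < π) (hper : ∀ j, o (j + π) = o j) {q : X}
    (hq : dist q (o 0) < δ) : RJoin (FStep F δ) (o 0) q π := by
  refine ⟨fun k => if k < π then o k else q, by simp [hπ], by simp, ?_⟩
  intro k hk
  show FStep F δ (if k < π then o k else q) (if k + 1 < π then o (k + 1) else q)
  rw [if_pos hk]
  rcases lt_or_ge (k + 1) π with h | h
  · rw [if_pos h]
    show infDist (o (k + 1)) (F (o k)) < δ
    rw [infDist_zero_of_mem (ho k)]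
    exact hδ
  · rw [if_neg (by omega)]
    show infDist q (F (o k)) < δ
    have hkk : k + 1 = π := by omega
    have : o (k + 1) ∈ F (o k) := ho k
    calc infDist q (F (o k)) ≤ dist q (o (k + 1)) := infDist_le_dist_of_mem this
      _ = dist q (o 0) := by rw [hkk, show π = 0 + π by omega, hper 0]
      _ < δ := hq

end FStep

section MetricChain

variable {X : Type*} [MetricSpace X] [CompactSpace X] [ConnectedSpace X]

/-- In a compact connected metric space, any two points are joined by an `r`-chain of
uniformly bounded length. -/
lemma metric_chain_bound {r : ℝ} (hr : 0 < r) :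
    ∃ K : ℕ, ∀ p q : X, ∃ m ≤ K, RJoin (fun x y => dist x y < r) p q m := by
  classical
  set R : X → X → Prop := fun x y => dist x y < r with hR
  have hsymm : ∀ x y : X, R x y → R y x := fun x y h => by rwa [hR, dist_comm] at h
  obtain ⟨p₀⟩ : Nonempty X := inferInstance
  -- reachable in ≤ n+1 steps from p₀
  set D : ℕ → Set X := fun n => {q | ∃ m ≤ n + 1, RJoin R p₀ q m} with hD
  have hopen : ∀ n, IsOpen (D n) := by
    intro n
    rw [Metric.isOpen_iff]
    rintro q ⟨m, hm, u, hu0, huL, hu⟩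
    rcases Nat.eq_zero_or_pos m with h0 | h0
    · -- q = p₀ : use the 1-step chain
      refine ⟨r, hr, fun q' hq' => ?_⟩
      have : q = p₀ := by rw [← hu0, ← huL, h0]
      refine ⟨1, by omega, RJoin.single ?_⟩
      rw [hR]
      show dist p₀ q' < r
      rw [dist_comm]
      simpa [this] using hq'
    · -- perturb last point
      refine ⟨r - dist (u (m - 1)) q, by
        have := hu (m - 1) (by omega)
        have e : m - 1 + 1 = m := by omega
        rw [e] at this
        rw [huL] at this
        linarith [this], fun q' hq' => ?_⟩
      refine ⟨m, hm, fun k => if k = m then q' else u k, ?_, by simp, ?_⟩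
      · show (if 0 = m then q' else u 0) = p₀
        rw [if_neg (by omega)]; exact hu0
      intro k hk
      show R (if k = m then q' else u k) (if k + 1 = m then q' else u (k + 1))
      rw [if_neg (by omega)]
      rcases eq_or_ne (k + 1) m with h | h
      · rw [if_pos h]
        show dist (u k) q' < r
        have hb : dist q q' < r - dist (u (m - 1)) q := by
          rw [dist_comm]; exact hq'
        have : k = m - 1 := by omega
        subst this
        calc dist (u (m - 1)) q' ≤ dist (u (m - 1)) q + dist q q' := dist_triangle _ _ _
          _ < r := by linarith
      · rw [if_neg h]
        exact hu k hk
  have hmono : ∀ n n', n ≤ n' → D n ⊆ D n' := by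
    intro n n' hnn' q ⟨m, hm, h⟩
    exact ⟨m, by omega, h⟩
  have hcover : ∀ q : X, ∃ n, q ∈ D n := by
    intro q
    -- reachability is clopen
    set E : Set X := {q | ∃ m, RJoin R p₀ q m} with hE
    have hEopen : IsOpen E := by
      rw [Metric.isOpen_iff]
      rintro x ⟨m, hm⟩
      exact ⟨r, hr, fun y hy => ⟨m + 1, hm.trans (RJoin.single (show dist x y < r from mem_ball'.mp hy))⟩⟩
    have hEclosed : IsClosed E := by
      rw [← isOpen_compl_iff, Metric.isOpen_iff]
      intro x hx
      refine ⟨r, hr, fun y hy hyE => hx ?_⟩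
      obtain ⟨m, hm⟩ := hyE
      exact ⟨m + 1, hm.trans (RJoin.single (show dist y x < r from mem_ball.mp hy))⟩
    have : E = Set.univ := IsClopen.eq_univ ⟨hEclosed, hEopen⟩ ⟨p₀, 0, RJoin.refl p₀⟩
    have hq : q ∈ E := this ▸ Set.mem_univ q
    obtain ⟨m, hm⟩ := hq
    exact ⟨m, m, by omega, hm⟩
  -- compactness: D n eventually covers
  obtain ⟨t, ht⟩ := isCompact_univ.elim_finite_subcover D hopen
    (fun q _ => Set.mem_iUnion.mpr (hcover q))
  -- get a single bound
  rcases t.eq_empty_or_nonempty with h | h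
  · exfalso
    have := ht (Set.mem_univ p₀)
    simp [h] at this
  · obtain ⟨N, hN⟩ : ∃ N, Set.univ ⊆ D N := by
      refine ⟨t.sup id, fun q hq => ?_⟩
      have := ht hq
      rw [Set.mem_iUnion₂] at this
      obtain ⟨n, hn, hqn⟩ := this
      exact hmono n _ (Finset.le_sup (f := id) hn) hqn
    refine ⟨(N + 1) + (N + 1), fun p q => ?_⟩
    obtain ⟨m₁, hm₁, h₁⟩ := hN (Set.mem_univ p)
    obtain ⟨m₂, hm₂, h₂⟩ := hN (Set.mem_univ q)
    exact ⟨m₁ + m₂, by omega, (h₁.symm hsymm).trans h₂⟩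

end MetricChain
section Universal

variable {X : Type*} [MetricSpace X] [CompactSpace X] [ConnectedSpace X]

lemma universal_chain (F : X → Set X) (hvals : ∀ x, (F x).Nonempty ∧ IsClosed (F x))
    (hdense : Dense {x : X | ∃ o : ℕ → X, o 0 = x ∧ IsOrbit F o ∧
      ∃ p : ℕ, 0 < p ∧ ∀ j : ℕ, o (j + p) = o j})
    {δ : ℝ} (hδ : 0 < δ) :
    ∃ (Y : X → X) (O : X → ℕ → X) (P : X → ℕ) (K : ℕ),
      (∀ x, O x 0 = Y x ∧ IsOrbit F (O x) ∧ 0 < P x ∧ (∀ j, O x (j + P x) = O x j) ∧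
        dist (Y x) x < δ / 4) ∧
      (∀ p q : X, ∃ L, 1 ≤ L ∧ L ≤ K ∧ RJoin (FStep F δ) p q L) := by
  classical
  have h8 : (0:ℝ) < δ / 8 := by linarith
  -- periodic approximations
  have happrox : ∀ x : X, ∃ y : X, ∃ o : ℕ → X, ∃ π : ℕ, dist y x < δ / 8 ∧ o 0 = y ∧
      IsOrbit F o ∧ 0 < π ∧ ∀ j, o (j + π) = o j := by
    intro x
    obtain ⟨y, hy1, hy2⟩ := Metric.dense_iff.mp hdense x (δ / 8) h8
    obtain ⟨o, ho0, ho, π, hπ, hper⟩ := hy2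
    exact ⟨y, o, π, mem_ball.mp hy1, ho0, ho, hπ, hper⟩
  choose Y₀ O₀ P₀ hY₀ hO₀0 hO₀ hP₀ hper₀ using happrox
  -- finite net
  obtain ⟨t, -, htfin, htcov⟩ := finite_cover_balls_of_compact (isCompact_univ : IsCompact (Set.univ : Set X)) h8
  have hnp : ∀ x : X, ∃ c, c ∈ t ∧ dist x c < δ / 8 := by
    intro x
    have := htcov (Set.mem_univ x)
    rw [Set.mem_iUnion₂] at this
    obtain ⟨c, hc, hxc⟩ := this
    exact ⟨c, hc, mem_ball.mp hxc⟩
  choose np hnpt hnpd using hnp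
  set Y : X → X := fun x => Y₀ (np x) with hY
  set O : X → ℕ → X := fun x => O₀ (np x) with hO
  set P : X → ℕ := fun x => P₀ (np x) with hP
  set Pmax : ℕ := htfin.toFinset.sup P₀ with hPmax
  have hPle : ∀ x, P x ≤ Pmax := by
    intro x
    exact Finset.le_sup (f := P₀) (htfin.mem_toFinset.mpr (hnpt x))
  have hYd : ∀ x, dist (Y x) x < δ / 4 := by
    intro x
    calc dist (Y x) x ≤ dist (Y₀ (np x)) (np x) + dist (np x) x := dist_triangle _ _ _
      _ < δ / 8 + δ / 8 := by
          have := hY₀ (np x)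
          have h2 := hnpd x
          rw [dist_comm (np x) x]
          exact add_lt_add this h2
      _ = δ / 4 := by ring
  have hprops : ∀ x, O x 0 = Y x ∧ IsOrbit F (O x) ∧ 0 < P x ∧ (∀ j, O x (j + P x) = O x j) ∧
      dist (Y x) x < δ / 4 :=
    fun x => ⟨hO₀0 (np x), hO₀ (np x), hP₀ (np x), hper₀ (np x), hYd x⟩
  -- hop between nearby periodic base points
  have hop : ∀ (x : X) (q : X), dist q (Y x) < δ → RJoin (FStep F δ) (Y x) q (P x) := by
    intro x q hq
    have h := hprops x
    have := periodic_hop hδ h.2.1 h.2.2.1 h.2.2.2.1 (by rwa [h.1])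
    rwa [h.1] at this
  -- metric chains
  obtain ⟨K₀, hK₀⟩ := metric_chain_bound (X := X) h8
  refine ⟨Y, O, P, 1 + K₀ * Pmax + Pmax, hprops, ?_⟩
  intro p q
  obtain ⟨w, hw⟩ := (hvals p).1
  obtain ⟨m, hm, c, hc0, hcm, hc⟩ := hK₀ w q
  -- build chain by induction along the metric chain
  have key : ∀ k ≤ m, ∃ L, 1 ≤ L ∧ L ≤ 1 + k * Pmax ∧ RJoin (FStep F δ) p (Y (c k)) L := by
    intro k hk
    induction k with
    | zero =>
        refine ⟨1, le_refl 1, by omega, RJoin.single ?_⟩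
        show infDist (Y (c 0)) (F p) < δ
        calc infDist (Y (c 0)) (F p) ≤ dist (Y (c 0)) w := infDist_le_dist_of_mem hw
          _ = dist (Y (c 0)) (c 0) := by rw [hc0]
          _ < δ / 4 := hYd (c 0)
          _ < δ := by linarith
    | succ k ih =>
        obtain ⟨L, hL1, hLle, hLj⟩ := ih (by omega)
        have hhop : RJoin (FStep F δ) (Y (c k)) (Y (c (k + 1))) (P (c k)) := by
          apply hop
          calc dist (Y (c (k + 1))) (Y (c k))
              ≤ dist (Y (c (k + 1))) (c (k + 1)) + dist (c (k + 1)) (c k) + dist (c k) (Y (c k)) :=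
                dist_triangle4 _ _ _ _
            _ < δ / 4 + δ / 8 + δ / 4 := by
                have h1 := hYd (c (k + 1))
                have h2 : dist (c (k + 1)) (c k) < δ / 8 := by
                  rw [dist_comm]; exact hc k (by omega)
                have h3 : dist (c k) (Y (c k)) < δ / 4 := by rw [dist_comm]; exact hYd (c k)
                linarith
            _ < δ := by linarith
        refine ⟨L + P (c k), by omega, ?_, hLj.trans hhop⟩
        have := hPle (c k)
        have hmul : (k + 1) * Pmax = k * Pmax + Pmax := by ring
        omega
  obtain ⟨L, hL1, hLle, hLj⟩ := key m le_rfl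
  have hfin : RJoin (FStep F δ) (Y (c m)) q (P (c m)) := by
    apply hop
    rw [← hcm]
    calc dist (c m) (Y (c m)) < δ / 4 := by rw [dist_comm]; exact hYd (c m)
      _ < δ := by linarith
  refine ⟨L + P (c m), by omega, ?_, hLj.trans hfin⟩
  have h1 := hPle (c m)
  have h2 : m * Pmax ≤ K₀ * Pmax := Nat.mul_le_mul_right _ hm
  omega

end Universal
section ChainExact

variable {X : Type*} [MetricSpace X] [CompactSpace X] [ConnectedSpace X]

lemma chain_exact (F : X → Set X) (hvals : ∀ x, (F x).Nonempty ∧ IsClosed (F x))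
    (hdense : Dense {x : X | ∃ o : ℕ → X, o 0 = x ∧ IsOrbit F o ∧
      ∃ p : ℕ, 0 < p ∧ ∀ j : ℕ, o (j + p) = o j})
    {δ : ℝ} (hδ : 0 < δ) :
    ∃ M : ℕ, ∀ p q : X, ∀ L, M < L → RJoin (FStep F δ) p q L := by
  classical
  obtain ⟨Y, O, P, K, hprops, huniv⟩ := universal_chain F hvals hdense hδ
  obtain ⟨x₀⟩ : Nonempty X := inferInstance
  set y := Y x₀ with hy
  set S : Set ℕ := {L | RJoin (FStep F δ) y y L} with hS
  have hS0 : 0 ∈ S := RJoin.refl y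
  have hSadd : ∀ u ∈ S, ∀ v ∈ S, u + v ∈ S := fun u hu v hv => hu.trans hv
  have hSsmul : ∀ (k : ℕ), ∀ u ∈ S, k * u ∈ S := by
    intro k
    induction k with
    | zero => intro u hu; simpa using hS0
    | succ k ih =>
        intro u hu
        have : (k + 1) * u = k * u + u := by ring
        rw [this]
        exact hSadd _ (ih u hu) _ hu
  obtain ⟨hO0, hOorb, hPpos, hPper, hYd⟩ := hprops x₀
  have hπ : P x₀ ∈ S := by
    have := periodic_hop hδ hOorb hPpos hPper (q := y)
      (by rw [hO0, ← hy, dist_self]; exact hδ)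
    rwa [hO0, ← hy] at this
  -- key class argument: differences in S are not all divisible by m
  have hclass : ∀ m : ℕ, 2 ≤ m → ∃ u ∈ S, ∃ v ∈ S, ¬ ((m : ℤ) ∣ (u : ℤ) - (v : ℤ)) := by
    intro m hm
    by_cases hd : ((P x₀ : ZMod m) = ((1 : ℕ) : ZMod m))
    · refine ⟨P x₀ + P x₀, hSadd _ hπ _ hπ, P x₀, hπ, ?_⟩
      intro hdvd
      have h1 : (m : ℤ) ∣ ((1 : ℕ) : ℤ) - (P x₀ : ℤ) :=
        Nat.modEq_iff_dvd.mp ((ZMod.natCast_eq_natCast_iff _ _ _).mp hd)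
      have h2 : (m : ℤ) ∣ (P x₀ : ℤ) := by
        have : ((P x₀ + P x₀ : ℕ) : ℤ) - (P x₀ : ℤ) = (P x₀ : ℤ) := by push_cast; ring
        rwa [this] at hdvd
      have h3 : (m : ℤ) ∣ 1 := by
        have := dvd_add h1 h2
        simpa using this
      have := Int.le_of_dvd one_pos h3
      omega
    · -- the open classes
      set A : ZMod m → Set X := fun r =>
        {x | ∃ L, 1 ≤ L ∧ RJoin (FStep F δ) y x L ∧ ((L : ZMod m) = r)} with hA
      have hAopen : ∀ r, IsOpen (A r) := by
        intro r
        rw [Metric.isOpen_iff]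
        rintro x ⟨L, hL1, ⟨u, hu0, huL, hu⟩, hLr⟩
        have hlast : infDist x (F (u (L - 1))) < δ := by
          have := hu (L - 1) (by omega)
          have e : L - 1 + 1 = L := by omega
          rw [e, huL] at this
          exact this
        refine ⟨δ - infDist x (F (u (L - 1))), by linarith, fun x' hx' => ?_⟩
        refine ⟨L, hL1, ⟨fun k => if k = L then x' else u k, ?_, by simp, ?_⟩, hLr⟩
        · show (if 0 = L then x' else u 0) = y
          rw [if_neg (by omega)]; exact hu0
        · intro k hk
          show FStep F δ (if k = L then x' else u k) (if k + 1 = L then x' else u (k + 1))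
          rw [if_neg (by omega)]
          rcases eq_or_ne (k + 1) L with h | h
          · rw [if_pos h]
            show infDist x' (F (u k)) < δ
            have hk1 : k = L - 1 := by omega
            subst hk1
            have hd' : dist x' x < δ - infDist x (F (u (L - 1))) := mem_ball.mp hx'
            calc infDist x' (F (u (L - 1)))
                ≤ infDist x (F (u (L - 1))) + dist x' x := infDist_le_infDist_add_dist
              _ < δ := by linarith
          · rw [if_neg h]
            exact hu k hk
      have hy' : y ∈ A ((P x₀ : ZMod m)) := ⟨P x₀, hPpos, hπ, rfl⟩
      have ho1 : O x₀ 1 ∈ A (((1 : ℕ) : ZMod m)) := by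
        refine ⟨1, le_rfl, RJoin.single ?_, rfl⟩
        show infDist (O x₀ 1) (F y) < δ
        rw [hy, ← hO0, infDist_zero_of_mem (hOorb 0)]
        exact hδ
      by_cases hdisj : ∀ r s : ZMod m, r ≠ s → A r ∩ A s = ∅
      · exfalso
        set U : Set X := A ((P x₀ : ZMod m)) with hU
        set V : Set X := ⋃ (r : ZMod m) (_ : r ≠ (P x₀ : ZMod m)), A r with hV
        have hVopen : IsOpen V := isOpen_iUnion fun r => isOpen_iUnion fun _ => hAopen r
        have hUV : U ∩ V = ∅ := by
          ext x
          simp only [Set.mem_inter_iff, Set.mem_empty_iff_false, iff_false, not_and]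
          intro hxU hxV
          rw [hV, Set.mem_iUnion] at hxV
          obtain ⟨r, hr⟩ := hxV
          rw [Set.mem_iUnion] at hr
          obtain ⟨hrne, hxr⟩ := hr
          have hd2 := hdisj r _ hrne
          have hx2 : x ∈ A r ∩ A ((P x₀ : ZMod m)) := ⟨hxr, hxU⟩
          rw [hd2] at hx2
          exact hx2
        have hUVuniv : U ∪ V = Set.univ := by
          ext x
          simp only [Set.mem_union, Set.mem_univ, iff_true]
          obtain ⟨L, hL1, hLK, hLj⟩ := huniv y x
          by_cases h : ((L : ZMod m) = (P x₀ : ZMod m))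
          · exact Or.inl ⟨L, hL1, hLj, h⟩
          · refine Or.inr ?_
            rw [hV, Set.mem_iUnion]
            exact ⟨(L : ZMod m), Set.mem_iUnion.mpr ⟨h, ⟨L, hL1, hLj, rfl⟩⟩⟩
        have hUclopen : IsClopen U := by
          constructor
          · rw [← isOpen_compl_iff]
            have hcomp : Uᶜ = V := by
              ext x
              constructor
              · intro hx
                have hxx : x ∈ U ∪ V := hUVuniv ▸ Set.mem_univ x
                rcases hxx with h | h
                · exact absurd h hx
                · exact h
              · intro hx hxU
                have hx2 : x ∈ U ∩ V := ⟨hxU, hx⟩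
                rw [hUV] at hx2
                exact hx2
            rw [hcomp]; exact hVopen
          · exact hAopen _
        rcases isClopen_iff.mp hUclopen with h | h
        · rw [h] at hy'; exact hy'
        · -- O x₀ 1 ∈ U, but also in A 1 with 1 ≠ P x₀ class
          have hmem : O x₀ 1 ∈ U := h ▸ Set.mem_univ _
          have hd2 := hdisj _ _ hd
          have hx2 : O x₀ 1 ∈ A ((P x₀ : ZMod m)) ∩ A (((1 : ℕ) : ZMod m)) := ⟨hmem, ho1⟩
          rw [hd2] at hx2
          exact hx2
      · push_neg at hdisj
        obtain ⟨r, s, hrs, hne⟩ := hdisj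
        obtain ⟨x, hxr, hxs⟩ := hne
        obtain ⟨L₁, hL₁1, hL₁j, hL₁r⟩ := hxr
        obtain ⟨L₂, hL₂1, hL₂j, hL₂s⟩ := hxs
        obtain ⟨L₃, hL₃1, hL₃K, hL₃j⟩ := huniv x y
        refine ⟨L₁ + L₃, hL₁j.trans hL₃j, L₂ + L₃, hL₂j.trans hL₃j, ?_⟩
        intro hdvd
        have h1 : ((L₁ + L₃ : ℕ) : ℤ) - ((L₂ + L₃ : ℕ) : ℤ) = (L₁ : ℤ) - (L₂ : ℤ) := by
          push_cast; ring
        rw [h1] at hdvd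
        have : L₂ ≡ L₁ [MOD m] := Nat.modEq_iff_dvd.mpr hdvd
        have : ((L₂ : ZMod m) = (L₁ : ZMod m)) := (ZMod.natCast_eq_natCast_iff _ _ _).mpr this
        rw [hL₁r, hL₂s] at this
        exact hrs this.symm
  -- from the class property: S contains two consecutive integers
  have hconsec : ∃ v, v ∈ S ∧ v + 1 ∈ S := by
    set T : AddSubgroup ℤ :=
      { carrier := {z : ℤ | ∃ u ∈ S, ∃ w ∈ S, z = (u : ℤ) - (w : ℤ)}
        zero_mem' := ⟨0, hS0, 0, hS0, by ring⟩
        add_mem' := by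
          rintro a b ⟨u1, h1, w1, h1', rfl⟩ ⟨u2, h2, w2, h2', rfl⟩
          exact ⟨u1 + u2, hSadd _ h1 _ h2, w1 + w2, hSadd _ h1' _ h2', by push_cast; ring⟩
        neg_mem' := by
          rintro a ⟨u, h, w, h', rfl⟩
          exact ⟨w, h', u, h, by ring⟩ } with hT
    obtain ⟨g, hg⟩ := Int.subgroup_cyclic T
    have hdvdall : ∀ z ∈ T, g ∣ z := by
      intro z hz
      rw [hg] at hz
      obtain ⟨n, hn⟩ := AddSubgroup.mem_closure_singleton.mp hz
      exact ⟨n, by rw [← hn, smul_eq_mul]; ring⟩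
    have hπT : ((P x₀ : ℕ) : ℤ) ∈ T := ⟨P x₀, hπ, 0, hS0, by simp⟩
    have hg0 : g ≠ 0 := by
      intro h
      have := hdvdall _ hπT
      rw [h] at this
      have : (P x₀ : ℤ) = 0 := zero_dvd_iff.mp this
      omega
    have hna : g.natAbs = 1 := by
      by_contra hne
      have h2 : 2 ≤ g.natAbs := by
        have := Int.natAbs_eq_zero.not.mpr hg0
        omega
      obtain ⟨u, huS, w, hwS, hnd⟩ := hclass g.natAbs h2
      apply hnd
      have hmem : ((u : ℤ) - (w : ℤ)) ∈ T := ⟨u, huS, w, hwS, rfl⟩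
      exact Int.natAbs_dvd.mpr (hdvdall _ hmem)
    have h1T : (1 : ℤ) ∈ T := by
      rw [hg, AddSubgroup.mem_closure_singleton]
      rcases Int.natAbs_eq_iff.mp hna with h | h
      · exact ⟨1, by simp [h]⟩
      · exact ⟨-1, by simp [h]⟩
    obtain ⟨u, huS, w, hwS, he⟩ := h1T
    have : u = w + 1 := by omega
    exact ⟨w, hwS, this ▸ huS⟩
  obtain ⟨v, hv, hv1⟩ := hconsec
  -- S contains all integers ≥ v * v
  have hbig : ∀ n, v * v ≤ n → n ∈ S := by
    intro n hn
    rcases Nat.eq_zero_or_pos v with h0 | h0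
    · have h1 : 1 ∈ S := by rw [h0] at hv1; simpa using hv1
      have := hSsmul n 1 h1
      simpa using this
    · have hq : v ≤ n / v := Nat.le_div_iff_mul_le h0 |>.mpr (by nlinarith)
      have hr : n % v < v := Nat.mod_lt _ h0
      set k := n / v - n % v with hk
      set r := n % v with hrr
      have e : n / v = k + r := by omega
      have hn' : n = k * v + r * (v + 1) := by
        calc n = v * (n / v) + n % v := (Nat.div_add_mod n v).symm
          _ = v * (k + r) + r := by rw [e]
          _ = k * v + r * (v + 1) := by ring
      rw [hn']
      exact hSadd _ (hSsmul k v hv) _ (hSsmul r (v + 1) hv1)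
  refine ⟨K + K + v * v, fun p q L hL => ?_⟩
  obtain ⟨L₁, hL₁1, hL₁K, h₁⟩ := huniv p y
  obtain ⟨L₂, hL₂1, hL₂K, h₂⟩ := huniv y q
  have hT : (L - L₁ - L₂) ∈ S := hbig _ (by omega)
  have hjoin := (h₁.trans hT).trans h₂
  rw [show L₁ + (L - L₁ - L₂) + L₂ = L by omega] at hjoin
  exact hjoin

end ChainExact
section Glue

variable {X : Type*} [MetricSpace X]

lemma step_mono {f : ℕ → ℕ} {n : ℕ} (h : ∀ i < n, f i ≤ f (i + 1)) : ∀ i ≤ n, f i ≤ f n := by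
  induction n with
  | zero =>
      intro i hi
      have : i = 0 := by omega
      subst this
      exact le_rfl
  | succ n ih =>
      intro i hi
      rcases Nat.lt_or_ge i (n + 1) with h' | h'
      · exact le_trans (ih (fun i hi => h i (by omega)) i (by omega)) (h n (by omega))
      · have : i = n + 1 := by omega
        subst this
        exact le_rfl

/-- Glue orbit segments with connecting chains into a single pseudo-orbit. -/
lemma glue (F : X → Set X) {δ : ℝ} (hδ : 0 < δ) (M : ℕ)
    (hM : ∀ p q : X, ∀ L, M < L → RJoin (FStep F δ) p q L) :
    ∀ (n : ℕ) (o : ℕ → ℕ → X) (a b : ℕ → ℕ),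
      (∀ i ≤ n, IsOrbit F (o i)) →
      (∀ i ≤ n, a i ≤ b i) →
      (∀ i < n, b i + M < a (i + 1)) →
      ∃ x : ℕ → X, IsPseudoOrbit F δ x ∧
        (∀ i ≤ n, ∀ j, a i ≤ j → j ≤ b i → x j = o i j) ∧
        (∀ j, b n ≤ j → x j = o n j) := by
  intro n
  induction n with
  | zero =>
      intro o a b horb hab hgap
      refine ⟨o 0, ?_, ?_, fun j _ => rfl⟩
      · intro i
        rw [infDist_zero_of_mem (horb 0 le_rfl i)]
        exact hδ
      · intro i hi j _ _
        interval_cases i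
        rfl
  | succ n ih =>
      intro o a b horb hab hgap
      obtain ⟨x, hx, hxmatch, hxtail⟩ := ih o a b (fun i hi => horb i (by omega))
        (fun i hi => hab i (by omega)) (fun i hi => hgap i (by omega))
      set L : ℕ := a (n + 1) - b n with hL
      have hLM : M < L := by
        have := hgap n (by omega)
        omega
      have hbn : b n < a (n + 1) := by have := hgap n (by omega); omega
      obtain ⟨u, hu0, huL, hu⟩ := hM (x (b n)) (o (n + 1) (a (n + 1))) L hLM
      set x' : ℕ → X := fun j =>
        if j ≤ b n then x j else if j < a (n + 1) then u (j - b n) else o (n + 1) j with hx'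
      have hx'eq : ∀ j, j ≤ b n → x' j = x j := by
        intro j hj
        show (if j ≤ b n then x j else _) = x j
        rw [if_pos hj]
      have hx'u : ∀ j, b n ≤ j → j < a (n + 1) → x' j = u (j - b n) := by
        intro j hj1 hj2
        show (if j ≤ b n then x j else if j < a (n + 1) then u (j - b n) else _) = _
        rcases eq_or_lt_of_le hj1 with h | h
        · subst h
          rw [if_pos le_rfl, Nat.sub_self, hu0]
        · rw [if_neg (by omega), if_pos hj2]
      have hx'o : ∀ j, a (n + 1) ≤ j → x' j = o (n + 1) j := by
        intro j hj
        show (if j ≤ b n then x j else if j < a (n + 1) then u (j - b n) else o (n + 1) j) = _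
        rw [if_neg (by omega), if_neg (by omega)]
      refine ⟨x', ?_, ?_, ?_⟩
      · -- pseudo-orbit
        intro j
        rcases lt_trichotomy j (b n) with h1 | h1 | h1
        · rw [hx'eq j (by omega), hx'eq (j + 1) (by omega)]
          exact hx j
        · -- j = b n : first chain step
          subst h1
          rw [hx'eq (b n) le_rfl]
          rcases lt_or_ge (b n + 1) (a (n + 1)) with h2 | h2
          · rw [hx'u (b n + 1) (by omega) h2]
            have : b n + 1 - b n = 1 := by omega
            rw [this]
            have := hu 0 (by omega)
            rwa [hu0] at this
          · -- L = 1
            have hL1 : L = 1 := by omega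
            rw [hx'o (b n + 1) (by omega)]
            have := hu 0 (by omega)
            rw [hu0] at this
            have e : o (n + 1) (b n + 1) = u 1 := by
              rw [show b n + 1 = a (n+1) by omega, ← huL, hL1]
            rw [e]
            exact this
        · rcases lt_or_ge (j + 1) (a (n + 1)) with h2 | h2
          · rw [hx'u j (by omega) (by omega), hx'u (j + 1) (by omega) h2]
            have e : j + 1 - b n = (j - b n) + 1 := by omega
            rw [e]
            exact hu (j - b n) (by omega)
          · rcases lt_or_ge j (a (n + 1)) with h3 | h3
            · -- j + 1 = a (n+1)
              have he : j + 1 = a (n + 1) := by omega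
              rw [hx'u j (by omega) h3, hx'o (j + 1) (by omega)]
              have e1 : j - b n + 1 = L := by omega
              have := hu (j - b n) (by omega)
              rwa [e1, huL, ← he] at this
            · rw [hx'o j h3, hx'o (j + 1) (by omega)]
              rw [infDist_zero_of_mem (horb (n + 1) le_rfl j)]
              exact hδ
      · -- matching
        intro i hi j hj1 hj2
        rcases Nat.lt_or_ge i (n + 1) with h | h
        · have hb : b i ≤ b n := by
            refine step_mono (f := b) (n := n) ?_ i (by omega)
            intro i' hi'
            have h1 := hgap i' (by omega)
            have h2 := hab (i' + 1) (by omega)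
            omega
          rw [hx'eq j (by omega)]
          exact hxmatch i (by omega) j hj1 hj2
        · have : i = n + 1 := by omega
          subst this
          exact hx'o j hj1
      · intro j hj
        exact hx'o j (le_trans (hab (n + 1) le_rfl) hj)

end Glue

/-- shadowing plus a dense set of points with periodic orbits, on a
compact connected metric space, yields the weak specification property. -/
theorem shadowing_dense_periodic_implies_weak_specification {X : Type*} [MetricSpace X]
    [CompactSpace X] [ConnectedSpace X]
    (F : X → Set X) (hvals : ∀ x, (F x).Nonempty ∧ IsClosed (F x))
    (hshad : Shadowing F)
    (hdense : Dense {x : X | ∃ o : ℕ → X, o 0 = x ∧ IsOrbit F o ∧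
      ∃ p : ℕ, 0 < p ∧ ∀ j : ℕ, o (j + p) = o j}) :
    ∀ ε : ℝ, 0 < ε → ∃ M : ℕ,
      ∀ (n : ℕ) (o : Fin (n + 1) → ℕ → X) (a b : Fin (n + 1) → ℕ),
        (∀ i, IsOrbit F (o i)) →
        (∀ i, a i ≤ b i) →
        (∀ i : Fin n, b i.castSucc + M < a i.succ) →
        ∃ z : ℕ → X, IsOrbit F z ∧
          ∀ i : Fin (n + 1), ∀ j : ℕ, a i ≤ j → j ≤ b i → dist (z j) (o i j) < ε := by
  intro ε hε
  obtain ⟨δ, hδ, hsh⟩ := hshad ε hε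
  obtain ⟨M, hM⟩ := chain_exact F hvals hdense hδ
  refine ⟨M, ?_⟩
  intro n o a b horb hab hgap
  set fi : ℕ → Fin (n + 1) := fun i => ⟨min i n, by omega⟩ with hfi
  have hfival : ∀ i : Fin (n + 1), fi (i : ℕ) = i := fun i =>
    Fin.ext (Nat.min_eq_left (Fin.is_le i))
  have hgap' : ∀ i < n, b (fi i) + M < a (fi (i + 1)) := by
    intro i hi
    have e1 : fi i = Fin.castSucc ⟨i, hi⟩ := Fin.ext (Nat.min_eq_left (by omega))
    have e2 : fi (i + 1) = Fin.succ ⟨i, hi⟩ := Fin.ext (Nat.min_eq_left (by omega))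
    rw [e1, e2]
    exact hgap ⟨i, hi⟩
  obtain ⟨x, hx, hxm, -⟩ := glue F hδ M hM n (fun i => o (fi i)) (fun i => a (fi i))
    (fun i => b (fi i)) (fun i _ => horb (fi i)) (fun i _ => hab (fi i)) hgap'
  obtain ⟨z, hz, hzd⟩ := hsh x hx
  refine ⟨z, hz, ?_⟩
  intro i j hj1 hj2
  have hmatch := hxm (i : ℕ) (Fin.is_le i) j
    (by rw [hfival i]; exact hj1) (by rw [hfival i]; exact hj2)
  rw [hfival i] at hmatch
  calc dist (z j) (o i j) = dist (z j) (x j) := by rw [hmatch]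
    _ < ε := hzd j
end

section
/- Let X be a compact metric space and F : X → 2^X a surjective set-valued mapping with the specification property. Then the shift map σ on the inverse limit lim← F = {(x_0,x_1,…) ∈ X^ℕ : x_{i+1} ∈ F(x_i)}, given by σ(x_0,x_1,…) = (x_1,x_2,…), has the (single-valued) specification property with respect to the metric D(x,y) = Σ_{j≥1} |π_j(x) − π_j(y)|/2^j. -/
set_option maxHeartbeats 1000000

/-- The metric on the inverse limit: `D(x,y) = Σ_{j ≥ 1} d(π_j x, π_j y) / 2^j`. -/
noncomputable def invLimDist {X : Type*} [MetricSpace X] (x y : ℕ → X) : ℝ :=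
  ∑' j : ℕ, dist (x j) (y j) / 2 ^ (j + 1)

lemma geom_half_summable (c : ℝ) : Summable (fun j : ℕ => c / 2 ^ (j + 1)) := by
  have e : ∀ j : ℕ, c / 2 ^ (j + 1) = c / 2 / 2 ^ j := by
    intro j; rw [pow_succ]; ring
  simp only [e]
  exact summable_geometric_two' c

lemma geom_half_tsum (c : ℝ) : ∑' j : ℕ, c / 2 ^ (j + 1) = c := by
  have e : ∀ j : ℕ, c / 2 ^ (j + 1) = c / 2 / 2 ^ j := by
    intro j; rw [pow_succ]; ring
  simp only [e]
  exact tsum_geometric_two' c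

lemma invLimDist_le_aux {X : Type*} [MetricSpace X] (x y : ℕ → X) (C δ : ℝ) (N : ℕ)
    (hb : ∀ j, dist (x j) (y j) ≤ C)
    (hδ : ∀ j ≤ N, dist (x j) (y j) ≤ δ) :
    invLimDist x y ≤ δ + C / 2 ^ (N + 1) := by
  have hδ0 : 0 ≤ δ := le_trans dist_nonneg (hδ 0 (Nat.zero_le N))
  have hC0 : 0 ≤ C := le_trans dist_nonneg (hb 0)
  have hs : Summable (fun j => dist (x j) (y j) / 2 ^ (j + 1)) :=
    Summable.of_nonneg_of_le (fun j => by positivity)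
      (fun j => by gcongr; exact hb j) (geom_half_summable C)
  rw [invLimDist, ← Summable.sum_add_tsum_nat_add (N + 1) hs]
  apply add_le_add
  · calc ∑ j ∈ Finset.range (N + 1), dist (x j) (y j) / 2 ^ (j + 1)
        ≤ ∑ j ∈ Finset.range (N + 1), δ / 2 ^ (j + 1) := by
          apply Finset.sum_le_sum
          intro j hj
          gcongr
          exact hδ j (Nat.lt_succ_iff.mp (Finset.mem_range.mp hj))
      _ ≤ ∑' j : ℕ, δ / 2 ^ (j + 1) := by
          apply Summable.sum_le_tsum
          · intro j _; positivity
          · exact geom_half_summable δ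
      _ = δ := geom_half_tsum δ
  · have key : ∀ j : ℕ, dist (x (j + (N + 1))) (y (j + (N + 1))) / 2 ^ (j + (N + 1) + 1)
        ≤ (C / 2 ^ (N + 1)) / 2 ^ (j + 1) := by
      intro j
      rw [div_div, ← pow_add]
      have e : N + 1 + (j + 1) = j + (N + 1) + 1 := by omega
      rw [e]
      gcongr
      exact hb _
    refine le_trans (Summable.tsum_le_tsum key ((summable_nat_add_iff (N + 1)).mpr hs)
      (geom_half_summable _)) (le_of_eq (geom_half_tsum _))

/-- if `F` (surjective) has the set-valued specification property, then the
shift map `σ` on the inverse limit `lim← F` (whose points are exactly the orbits of `F`)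
has the single-valued specification property with respect to the metric `D`. -/
theorem shift_specification {X : Type*} [MetricSpace X] [CompactSpace X]
    (F : X → Set X) (hvals : ∀ x, (F x).Nonempty ∧ IsClosed (F x))
    (hsurj : ∀ y : X, ∃ x : X, y ∈ F x)
    (hspec : Specification F) :
    ∀ ε : ℝ, 0 < ε → ∃ M : ℕ,
      ∀ (n : ℕ) (o : Fin (n + 1) → ℕ → X) (a b : Fin (n + 1) → ℕ),
        (∀ i, IsOrbit F (o i)) →
        (∀ i, a i ≤ b i) →
        (∀ i : Fin n, b i.castSucc + M < a i.succ) →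
        ∀ P : ℕ, M + b (Fin.last n) - a 0 < P →
          ∃ z : ℕ → X, IsOrbit F z ∧ (∀ k : ℕ, z (k + P) = z k) ∧
            ∀ i : Fin (n + 1), ∀ j : ℕ, a i ≤ j → j ≤ b i →
              invLimDist (fun k => z (k + j)) (fun k => o i (k + j)) < ε := by
  intro ε hε
  -- a uniform bound on distances in the compact space X
  obtain ⟨C₀, hC₀⟩ := Metric.isBounded_iff.mp (isCompact_univ : IsCompact (Set.univ : Set X)).isBounded
  set C : ℝ := max C₀ 0 with hCdef
  have hC0 : 0 ≤ C := le_max_right _ _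
  have hC : ∀ u v : X, dist u v ≤ C := fun u v =>
    le_trans (hC₀ (Set.mem_univ u) (Set.mem_univ v)) (le_max_left _ _)
  -- choose N with C / 2^(N+1) < ε/2
  obtain ⟨N, hN⟩ : ∃ N : ℕ, C / 2 ^ (N + 1) < ε / 2 := by
    obtain ⟨N, hN⟩ := pow_unbounded_of_one_lt (C / (ε / 2)) (one_lt_two (α := ℝ))
    refine ⟨N, ?_⟩
    rw [div_lt_iff₀ (by positivity)]
    rw [div_lt_iff₀ (by positivity)] at hN
    calc C < ε / 2 * 2 ^ N := by linarith
      _ ≤ ε / 2 * 2 ^ (N + 1) := by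
          have h2 : (2:ℝ) ^ N ≤ 2 ^ (N + 1) := by
            apply pow_le_pow_right₀ <;> norm_num
          nlinarith
  obtain ⟨M', hM'⟩ := hspec (ε / 2) (by linarith)
  refine ⟨M' + N, ?_⟩
  intro n o a b ho hab hgap P hP
  -- monotonicity facts
  have hmona : ∀ i : Fin (n + 1), a 0 ≤ a i := by
    intro i
    induction i using Fin.induction with
    | zero => exact le_refl _
    | succ i ih =>
        exact le_trans ih (le_trans (hab i.castSucc)
          (le_of_lt (lt_of_le_of_lt (Nat.le_add_right _ _) (hgap i))))
  have hmonb : ∀ i : Fin (n + 1), b i ≤ b (Fin.last n) := by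
    intro i
    induction i using Fin.reverseInduction with
    | last => exact le_refl _
    | cast i ih =>
        refine le_trans ?_ ih
        exact le_of_lt (lt_of_le_of_lt (Nat.le_add_right _ _)
          (lt_of_lt_of_le (hgap i) (hab i.succ)))
  have hP0 : 0 < P := by omega
  -- apply specification to shifted orbits with extended windows
  set o' : Fin (n + 1) → ℕ → X := fun i k => o i (k + a 0) with ho'def
  set a' : Fin (n + 1) → ℕ := fun i => a i - a 0 with ha'def
  set b' : Fin (n + 1) → ℕ := fun i => b i - a 0 + N with hb'def
  have ho' : ∀ i, IsOrbit F (o' i) := by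
    intro i k
    have : k + 1 + a 0 = (k + a 0) + 1 := by omega
    simp only [ho'def, this]
    exact ho i (k + a 0)
  have hab' : ∀ i, a' i ≤ b' i := by
    intro i
    have := hab i
    simp only [ha'def, hb'def]
    omega
  have hgap' : ∀ i : Fin n, b' i.castSucc + M' < a' i.succ := by
    intro i
    have h1 := hgap i
    have h2 : a 0 ≤ b i.castSucc := le_trans (hmona i.castSucc) (hab i.castSucc)
    simp only [ha'def, hb'def]
    omega
  have hP' : M' + b' (Fin.last n) - a' 0 < P := by
    have h2 : a 0 ≤ b (Fin.last n) := le_trans (hmona _) (hab _)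
    simp only [ha'def, hb'def]
    omega
  obtain ⟨z, hz, hzP, htr⟩ := hM' n o' a' b' ho' hab' hgap' P hP'
  -- the cyclically extended orbit
  have key : ∀ m : ℕ, z ((m + 1) % P) ∈ F (z (m % P)) := by
    intro m
    have hm : m % P < P := Nat.mod_lt _ hP0
    have e : (m % P + 1) % P = (m + 1) % P := by
      conv_rhs => rw [← Nat.mod_add_mod]
    by_cases h : m % P + 1 = P
    · have h1 : (m + 1) % P = 0 := by rw [← e, h, Nat.mod_self]
      rw [h1, ← hzP]
      have hh := hz (m % P)
      rw [h] at hh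
      exact hh
    · have h1 : (m + 1) % P = m % P + 1 := by
        rw [← e, Nat.mod_eq_of_lt (by omega)]
      rw [h1]
      exact hz (m % P)
  set r : ℕ := P - a 0 % P with hrdef
  set w : ℕ → X := fun m => z ((m + r) % P) with hwdef
  have hworb : IsOrbit F w := by
    intro k
    have e : k + 1 + r = (k + r) + 1 := by omega
    simp only [hwdef, e]
    exact key (k + r)
  have hwper : ∀ k : ℕ, w (k + P) = w k := by
    intro k
    have e : k + P + r = (k + r) + P := by omega
    simp only [hwdef, e, Nat.add_mod_right]
  -- the crucial index computation
  have hwval : ∀ k j : ℕ, a 0 ≤ j → k + j - a 0 < P → w (k + j) = z (k + j - a 0) := by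
    intro k j hj ht
    have hsP : a 0 % P < P := Nat.mod_lt _ hP0
    have hqs : P * (a 0 / P) + a 0 % P = a 0 := Nat.div_add_mod (a 0) P
    set A := P * (a 0 / P) with hA
    have e : k + j + r = ((k + j - a 0) + A) + P := by
      simp only [hrdef]; omega
    simp only [hwdef, e, Nat.add_mod_right, hA, Nat.mul_comm P (a 0 / P),
      Nat.add_mul_mod_self_right]
    rw [Nat.mod_eq_of_lt ht]
  refine ⟨w, hworb, hwper, ?_⟩
  intro i j haj hjb
  have ha0j : a 0 ≤ j := le_trans (hmona i) haj
  have hbi : b i ≤ b (Fin.last n) := hmonb i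
  refine lt_of_le_of_lt (invLimDist_le_aux _ _ C (ε / 2) N
    (fun k => hC _ _) ?_) (by linarith)
  intro k hk
  have ht : k + j - a 0 < P := by omega
  have hwv : w (k + j) = z (k + j - a 0) := hwval k j ha0j ht
  have h1 : a' i ≤ k + j - a 0 := by simp only [ha'def]; omega
  have h2 : k + j - a 0 ≤ b' i := by simp only [hb'def]; omega
  have := htr i (k + j - a 0) h1 h2
  simp only [ho'def] at this
  have e : k + j - a 0 + a 0 = k + j := by omega
  rw [e] at this
  rw [hwv]
  exact le_of_lt this
end

section
/- Let f : [0,1] → [0,1] be a continuous surjective single-valued map and let F = f^{-1} : [0,1] → 2^{[0,1]} be its set-valued inverse, F(x) = {y : f(y) = x}. Then F is topologically mixing if and only if F has the specification property. -/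
def MixingSV {X : Type*} [MetricSpace X] (F : X → Set X) : Prop :=
  ∀ U V : Set X, IsOpen U → IsOpen V → U.Nonempty → V.Nonempty →
    ∃ M : ℕ, ∀ m : ℕ, M < m →
      ∃ x ∈ U, ∃ o : ℕ → X, o 0 = x ∧ IsOrbit F o ∧ o m ∈ V

open Set Function

lemma exists_seq_of_forall_exists {α : Type*} {Q : ℕ → α → Prop} {R : α → α → Prop} {L : ℕ}
    {a₀ : α} (h₀ : Q 0 a₀) (hstep : ∀ t < L, ∀ a, Q t a → ∃ b, Q (t + 1) b ∧ R a b) :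
    ∃ s : ℕ → α, s 0 = a₀ ∧ (∀ t ≤ L, Q t (s t)) ∧ ∀ t < L, R (s t) (s (t + 1)) := by
  induction L with
  | zero =>
    exact ⟨fun _ => a₀, rfl, fun t ht => by rwa [Nat.le_zero.1 ht],
      fun t ht => absurd ht t.not_lt_zero⟩
  | succ L ih =>
    obtain ⟨s, hs₀, hQ, hR⟩ := ih fun t ht => hstep t (by omega)
    obtain ⟨b, hb, hsb⟩ := hstep L (Nat.lt_succ_self L) (s L) (hQ L le_rfl)
    refine ⟨update s (L + 1) b, by rwa [update_of_ne (by omega)], fun t ht => ?_, fun t ht => ?_⟩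
    · rcases (Nat.le_succ_iff.1 ht) with ht | rfl
      · rw [update_of_ne (by omega)]; exact hQ t ht
      · rwa [update_self]
    · rcases (Nat.lt_succ_iff_lt_or_eq.1 ht) with ht | rfl
      · rw [update_of_ne (by omega), update_of_ne (by omega)]; exact hR t ht
      · rwa [update_self, update_of_ne (by omega)]

lemma Fin.monotone_of_le_of_lt {n M : ℕ} {a b : Fin (n + 1) → ℕ} (hab : ∀ i, a i ≤ b i)
    (hgap : ∀ i : Fin n, b i.castSucc + M < a i.succ) : Monotone a ∧ Monotone b :=
  ⟨Fin.monotone_iff_le_succ.2 fun i => by have := hab i.castSucc; have := hgap i; omega,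
    Fin.monotone_iff_le_succ.2 fun i => by have := hab i.succ; have := hgap i; omega⟩

section SetValued

variable {X : Type*} {F : X → Set X}

lemma IsOrbit.cons {o : ℕ → X} (ho : IsOrbit F o) {x : X} (hx : o 0 ∈ F x) :
    IsOrbit F (fun j => if j = 0 then x else o (j - 1)) := by
  intro j
  cases j with
  | zero => simpa using hx
  | succ j => simpa using ho j

lemma exists_isOrbit_apply_eq (hne : ∀ x, (F x).Nonempty) (hpre : ∀ y, ∃ x, y ∈ F x) (v : X) :
    ∀ m : ℕ, ∃ o, IsOrbit F o ∧ o m = v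
  | 0 => by
    choose next hnext using hne
    exact ⟨fun k => next^[k] v, fun j => by simpa only [iterate_succ_apply'] using hnext _, rfl⟩
  | m + 1 => by
    obtain ⟨o, ho, hom⟩ := exists_isOrbit_apply_eq hne hpre v m
    obtain ⟨x, hx⟩ := hpre (o 0)
    exact ⟨_, ho.cons hx, by simpa using hom⟩

theorem mixingSV_of_specification [MetricSpace X] (hne : ∀ x, (F x).Nonempty)
    (hpre : ∀ y, ∃ x, y ∈ F x) (hspec : Specification F) : MixingSV F := by
  intro U V hU hV ⟨u, hu⟩ ⟨v, hv⟩
  obtain ⟨εu, hεu, hballu⟩ := Metric.isOpen_iff.1 hU u hu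
  obtain ⟨εv, hεv, hballv⟩ := Metric.isOpen_iff.1 hV v hv
  obtain ⟨M, hM⟩ := hspec (min εu εv) (lt_min hεu hεv)
  refine ⟨M, fun m hm => ?_⟩
  obtain ⟨o₀, ho₀, hu₀⟩ := exists_isOrbit_apply_eq hne hpre u 0
  obtain ⟨o₁, ho₁, hv₁⟩ := exists_isOrbit_apply_eq hne hpre v m
  obtain ⟨z, hz, -, hzo⟩ := hM 1 ![o₀, o₁] ![0, m] ![0, m] (Fin.forall_fin_two.2 ⟨ho₀, ho₁⟩)
    (Fin.forall_fin_two.2 ⟨le_rfl, le_rfl⟩) (fun i => by fin_cases i; simpa using hm)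
    (M + m + 1) (by simp)
  have h0 := hzo 0 0 le_rfl le_rfl
  have hm' := hzo 1 m le_rfl le_rfl
  simp only [Matrix.cons_val_zero, Matrix.cons_val_one] at h0 hm'
  refine ⟨z 0, hballu ?_, z, rfl, hz, hballv ?_⟩
  · rw [Metric.mem_ball, ← hu₀]; exact h0.trans_le (min_le_left _ _)
  · rw [Metric.mem_ball, ← hv₁]; exact hm'.trans_le (min_le_right _ _)

end SetValued

namespace IntervalMap

variable {g : ℝ → ℝ}

/-! ### Intervals and covering chains -/

def IsIcc (s : Set ℝ) : Prop := ∃ a b : ℝ, a ≤ b ∧ s = Icc a b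

lemma isIcc_Icc {a b : ℝ} (h : a ≤ b) : IsIcc (Icc a b) := ⟨a, b, h, rfl⟩

lemma IsIcc.image (hg : Continuous g) {s : Set ℝ} (hs : IsIcc s) :
    IsIcc (g '' s) := by
  obtain ⟨a, b, hab, rfl⟩ := hs
  have hK := (isCompact_Icc (a := a) (b := b)).image hg
  rw [hg.continuousOn.image_Icc hab]
  exact isIcc_Icc (Real.sInf_le_sSup _ hK.bddBelow hK.bddAbove)

lemma IsIcc.Icc_subset {S : Set ℝ} (hS : IsIcc S) {u w : ℝ} (hu : u ∈ S) (hw : w ∈ S) :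
    Icc u w ⊆ S := by
  obtain ⟨a, b, -, rfl⟩ := hS
  exact Icc_subset_Icc hu.1 hw.2

/-- `t` is the first time in `[p, q]` at which `h` hits `h q`, and `s` the last time in `[p, t]`
at which it hits `h p`; in between `h` cannot leave `[h p, h q]`. -/
lemma exists_Icc_image_eq_Icc {h : ℝ → ℝ} (hh : Continuous h) {p q : ℝ} (hpq : p ≤ q)
    (hle : h p ≤ h q) : ∃ s t, p ≤ s ∧ s ≤ t ∧ t ≤ q ∧ h '' Icc s t = Icc (h p) (h q) := by
  obtain ⟨t, ⟨⟨hpt, htq⟩, ht⟩, ht_min⟩ :=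
    (isCompact_Icc.inter_right (isClosed_singleton.preimage hh)).exists_isLeast
      (⟨q, ⟨hpq, le_rfl⟩, rfl⟩ : (Icc p q ∩ h ⁻¹' {h q}).Nonempty)
  obtain ⟨s, ⟨⟨hps, hst⟩, hs⟩, hs_max⟩ :=
    (isCompact_Icc.inter_right (isClosed_singleton.preimage hh)).exists_isGreatest
      (⟨p, ⟨le_rfl, hpt⟩, rfl⟩ : (Icc p t ∩ h ⁻¹' {h p}).Nonempty)
  simp only [mem_preimage, mem_singleton_iff] at hs ht
  refine ⟨s, t, hps, hst, htq, subset_antisymm ?_ ?_⟩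
  · rintro _ ⟨x, ⟨hsx, hxt⟩, rfl⟩
    constructor
    · by_contra! hlt
      obtain ⟨y, ⟨hxy, hyt⟩, hy⟩ :=
        intermediate_value_Icc hxt hh.continuousOn ⟨hlt.le, ht ▸ hle⟩
      have : y ≤ s := hs_max ⟨⟨hps.trans (hsx.trans hxy), hyt⟩, hy⟩
      obtain rfl : x = s := by linarith
      exact hlt.ne hs
    · by_contra! hlt
      obtain ⟨y, ⟨hsy, hyx⟩, hy⟩ :=
        intermediate_value_Icc hsx hh.continuousOn ⟨hs ▸ hle, hlt.le⟩
      have : t ≤ y := ht_min ⟨⟨hps.trans hsy, hyx.trans (hxt.trans htq)⟩, hy⟩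
      obtain rfl : x = t := by linarith
      exact hlt.ne' ht
  · simpa only [hs, ht] using intermediate_value_Icc hst hh.continuousOn

lemma exists_Icc_image_eq_Icc' {h : ℝ → ℝ} (hh : Continuous h) {p q : ℝ} (hpq : p ≤ q)
    (hle : h q ≤ h p) : ∃ s t, p ≤ s ∧ s ≤ t ∧ t ≤ q ∧ h '' Icc s t = Icc (h q) (h p) := by
  obtain ⟨s, t, hps, hst, htq, himg⟩ := exists_Icc_image_eq_Icc hh.neg hpq (neg_le_neg hle)
  refine ⟨s, t, hps, hst, htq, ?_⟩
  have hneg : h '' Icc s t = Neg.neg '' ((-h) '' Icc s t) := by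
    rw [← image_comp]; simp
  rw [hneg, himg, image_neg_Icc]
  simp

lemma IsIcc.exists_isIcc_subset_image_eq (hg : Continuous g) {A : Set ℝ}
    (hA : IsIcc A) {u v : ℝ} (huv : u ≤ v) (hsub : Icc u v ⊆ g '' A) :
    ∃ B, IsIcc B ∧ B ⊆ A ∧ g '' B = Icc u v := by
  obtain ⟨xu, hxu, rfl⟩ := hsub (left_mem_Icc.2 huv)
  obtain ⟨xv, hxv, rfl⟩ := hsub (right_mem_Icc.2 huv)
  rcases le_total xu xv with hle | hle
  · obtain ⟨s, t, hs, hst, ht, himg⟩ := exists_Icc_image_eq_Icc hg hle huv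
    exact ⟨Icc s t, isIcc_Icc hst, (Icc_subset_Icc hs ht).trans (hA.Icc_subset hxu hxv), himg⟩
  · obtain ⟨s, t, hs, hst, ht, himg⟩ := exists_Icc_image_eq_Icc' hg hle huv
    exact ⟨Icc s t, isIcc_Icc hst, (Icc_subset_Icc hs ht).trans (hA.Icc_subset hxv hxu), himg⟩

lemma IsIcc.exists_fixedPt_of_subset_image {h : ℝ → ℝ} (hh : Continuous h) {B : Set ℝ}
    (hB : IsIcc B) (hsub : B ⊆ h '' B) : ∃ p ∈ B, h p = p := by
  obtain ⟨a, b, hab, rfl⟩ := hB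
  obtain ⟨x, hx, hxa⟩ := hsub (left_mem_Icc.2 hab)
  obtain ⟨y, hy, hyb⟩ := hsub (right_mem_Icc.2 hab)
  obtain ⟨p, hp, hfix⟩ := intermediate_value_uIcc (hh.sub continuous_id).continuousOn
    (mem_uIcc.2 (Or.inl ⟨by simp [hxa, hx.1], by simp [hyb, hy.2]⟩) :
      (0 : ℝ) ∈ uIcc (h x - id x) (h y - id y))
  exact ⟨p, uIcc_subset_Icc hx hy hp, sub_eq_zero.1 hfix⟩

def IsIccChain (g : ℝ → ℝ) (C : ℕ → Set ℝ) (K : ℕ) : Prop :=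
  (∀ k ≤ K, IsIcc (C k)) ∧ ∀ k < K, C (k + 1) ⊆ g '' C k

lemma IsIccChain.exists_isIcc_iterate_image_eq (hg : Continuous g)
    {C : ℕ → Set ℝ} {K : ℕ} (hC : IsIccChain g C K) :
    ∃ B, IsIcc B ∧ (∀ k ≤ K, g^[k] '' B ⊆ C k) ∧ g^[K] '' B = C K := by
  induction K with
  | zero => exact ⟨C 0, hC.1 0 le_rfl, fun k hk => by obtain rfl := Nat.le_zero.1 hk; simp, by simp⟩
  | succ K ih =>
    obtain ⟨B, hB, hBC, hBK⟩ :=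
      ih ⟨fun k hk => hC.1 k (by omega), fun k hk => hC.2 k (by omega)⟩
    obtain ⟨u, v, huv, hCK⟩ := hC.1 (K + 1) le_rfl
    have hsub : Icc u v ⊆ g^[K + 1] '' B := by
      rw [← hCK, iterate_succ', image_comp, hBK]
      exact hC.2 K (Nat.lt_succ_self K)
    obtain ⟨B', hB', hB'B, hB'K⟩ := hB.exists_isIcc_subset_image_eq (hg.iterate _) huv hsub
    refine ⟨B', hB', fun k hk => ?_, hB'K.trans hCK.symm⟩
    rcases Nat.lt_or_ge k (K + 1) with hk' | hk'
    · exact (image_mono hB'B).trans (hBC k (by omega))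
    · rw [show k = K + 1 by omega, hB'K, hCK]

lemma IsIccChain.exists_isPeriodicPt (hg : Continuous g) {C : ℕ → Set ℝ} {P : ℕ}
    (hC : IsIccChain g C P) (hloop : C 0 ⊆ C P) :
    ∃ p, IsPeriodicPt g P p ∧ ∀ k ≤ P, g^[k] p ∈ C k := by
  obtain ⟨B, hB, hBC, hBP⟩ := hC.exists_isIcc_iterate_image_eq hg
  have hB0 : B ⊆ C 0 := by simpa using hBC 0 (Nat.zero_le P)
  obtain ⟨p, hpB, hp⟩ :=
    hB.exists_fixedPt_of_subset_image (hg.iterate P) (hB0.trans (hloop.trans hBP.ge))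
  exact ⟨p, hp, fun k hk => hBC k hk (mem_image_of_mem _ hpB)⟩

lemma IsIccChain.exists_join (hg : Continuous g) {C D : ℕ → Set ℝ} {K L m : ℕ}
    (hC : IsIccChain g C K) (hD : IsIccChain g D L) (hm : 0 < m) (hCD : D 0 ⊆ g^[m] '' C K) :
    ∃ E, IsIccChain g E (K + m + L) ∧ (∀ k ≤ K, E k = C k) ∧ ∀ t, E (K + m + t) = D t := by
  set E : ℕ → Set ℝ := fun k =>
    if k ≤ K then C k else if k < K + m then g^[k - K] '' C K else D (k - (K + m))
  have hleft : ∀ k ≤ K, E k = C k := fun k hk => if_pos hk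
  have hmid : ∀ k, K ≤ k → k < K + m → E k = g^[k - K] '' C K := by
    intro k hk hk'
    rcases hk.eq_or_lt with rfl | hlt
    · simp [E]
    · simp [E, hlt.not_ge, hk']
  have hright : ∀ t, E (K + m + t) = D t := fun t => by simp [E]; omega
  refine ⟨E, ⟨fun k hk => ?_, fun k hk => ?_⟩, hleft, hright⟩
  · rcases le_or_gt k K with h | h
    · rw [hleft k h]; exact hC.1 k h
    rcases lt_or_ge k (K + m) with h' | h'
    · rw [hmid k h.le h']; exact (hC.1 K le_rfl).image (hg.iterate _)
    · obtain ⟨t, rfl⟩ := Nat.exists_eq_add_of_le h'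
      rw [hright]; exact hD.1 t (by omega)
  · rcases lt_or_ge k K with h | h
    · rw [hleft k h.le, hleft (k + 1) h]; exact hC.2 k h
    rcases lt_or_ge (k + 1) (K + m) with h' | h'
    · rw [hmid k h (by omega), hmid (k + 1) (by omega) h', ← image_comp, ← iterate_succ',
        show k + 1 - K = k - K + 1 by omega]
    rcases h'.eq_or_lt with h' | h'
    · rw [← h', ← add_zero (K + m), hright, hmid k h (by omega), ← image_comp, ← iterate_succ']
      rwa [show (k - K).succ = m by omega]
    · obtain ⟨t, rfl⟩ := Nat.exists_eq_add_of_le (show K + m ≤ k by omega)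
      rw [hright, show K + m + t + 1 = K + m + (t + 1) by omega, hright]
      exact hD.2 t (by omega)

/-! ### Mixing maps of `[0, 1]` -/

def IntervalMixing (g : ℝ → ℝ) : Prop :=
  ∀ l₁ r₁ l₂ r₂ : ℝ, 0 ≤ l₁ → l₁ < r₁ → r₁ ≤ 1 → 0 ≤ l₂ → l₂ < r₂ → r₂ ≤ 1 →
    ∃ N : ℕ, ∀ n ≥ N, ∃ x ∈ Ioo l₁ r₁, g^[n] x ∈ Ioo l₂ r₂

def IsAccessible (g : ℝ → ℝ) (y : ℝ) : Prop := ∃ p ∈ Ioo (0 : ℝ) 1, ∃ k : ℕ, g^[k] p = y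

lemma IntervalMixing.not_mapsTo_Icc_left (hmix : IntervalMixing g) {s : ℝ} (h0 : 0 < s)
    (h1 : s < 1) : ¬ MapsTo g (Icc 0 s) (Icc 0 s) := fun hs => by
  obtain ⟨N, hN⟩ := hmix 0 s s 1 le_rfl h0 h1.le h0.le h1 le_rfl
  obtain ⟨x, hx, hNx⟩ := hN N le_rfl
  exact hNx.1.not_ge (hs.iterate N ⟨hx.1.le, hx.2.le⟩).2

lemma IntervalMixing.not_mapsTo_Icc_right (hmix : IntervalMixing g) {s : ℝ} (h0 : 0 < s)
    (h1 : s < 1) : ¬ MapsTo g (Icc s 1) (Icc s 1) := fun hs => by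
  obtain ⟨N, hN⟩ := hmix s 1 0 s h0.le h1 le_rfl le_rfl h0 h1.le
  obtain ⟨x, hx, hNx⟩ := hN N le_rfl
  exact hNx.2.not_ge (hs.iterate N ⟨hx.1.le, hx.2.le⟩).1

lemma IntervalMixing.exists_Icc_subset_iterate_image (hmix : IntervalMixing g)
    (hg : Continuous g) {l r τ : ℝ} (hl : 0 ≤ l) (hlr : l < r) (hr : r ≤ 1) (hτ : 0 < τ)
    (hτ1 : τ ≤ 1) : ∃ N : ℕ, ∀ n ≥ N, Icc τ (1 - τ) ⊆ g^[n] '' Icc l r := by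
  obtain ⟨N₁, hN₁⟩ := hmix l r 0 τ hl hlr hr le_rfl hτ hτ1
  obtain ⟨N₂, hN₂⟩ := hmix l r (1 - τ) 1 hl hlr hr (by linarith) (by linarith) le_rfl
  refine ⟨max N₁ N₂, fun n hn => ?_⟩
  obtain ⟨x, hx, hnx⟩ := hN₁ n (le_of_max_le_left hn)
  obtain ⟨y, hy, hny⟩ := hN₂ n (le_of_max_le_right hn)
  exact (Icc_subset_Icc hnx.2.le hny.1.le).trans
    (((isIcc_Icc hlr.le).image (hg.iterate n)).Icc_subset
      (mem_image_of_mem _ (Ioo_subset_Icc_self hx)) (mem_image_of_mem _ (Ioo_subset_Icc_self hy)))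

/-- Every `[a, b] ⊆ [0, 1]` of length at least `δ` contains one of finitely many cells
`[k δ / 2, (k + 1) δ / 2]`. -/
lemma IntervalMixing.exists_Icc_subset_iterate_image_of_le (hmix : IntervalMixing g)
    (hg : Continuous g) {δ τ : ℝ} (hδ : 0 < δ) (hτ : 0 < τ) (hτ1 : τ ≤ 1) :
    ∃ N : ℕ, ∀ a b : ℝ, 0 ≤ a → a + δ ≤ b → b ≤ 1 → ∀ n ≥ N,
      Icc τ (1 - τ) ⊆ g^[n] '' Icc a b := by
  have hcell : ∀ k : ℕ, ∃ Nk : ℕ, k * (δ / 2) + δ / 2 ≤ 1 → ∀ n ≥ Nk,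
      Icc τ (1 - τ) ⊆ g^[n] '' Icc (k * (δ / 2)) (k * (δ / 2) + δ / 2) := by
    intro k
    by_cases hk : k * (δ / 2) + δ / 2 ≤ 1
    · obtain ⟨Nk, hNk⟩ := hmix.exists_Icc_subset_iterate_image hg (l := k * (δ / 2))
        (by positivity) (by linarith) hk hτ hτ1
      exact ⟨Nk, fun _ => hNk⟩
    · exact ⟨0, fun h => absurd h hk⟩
  choose Nk hNk using hcell
  refine ⟨(Finset.range (⌈2 / δ⌉₊ + 2)).sup Nk, fun a b ha hab hb n hn => ?_⟩
  set k := ⌈2 * a / δ⌉₊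
  have hk₁ : a ≤ k * (δ / 2) := by
    have := Nat.le_ceil (2 * a / δ)
    rw [div_le_iff₀ hδ] at this
    linarith
  have hk₂ : k * (δ / 2) < a + δ / 2 := by
    have := Nat.ceil_lt_add_one (by positivity : 0 ≤ 2 * a / δ)
    rw [← sub_lt_iff_lt_add, lt_div_iff₀ hδ] at this
    linarith
  have hkK : k ∈ Finset.range (⌈2 / δ⌉₊ + 2) := by
    have : 2 * a / δ ≤ 2 / δ := by gcongr; linarith
    have := Nat.ceil_mono this
    rw [Finset.mem_range]
    omega
  refine (hNk k (by linarith) n ((Finset.le_sup hkK).trans hn)).trans (image_mono ?_)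
  exact Icc_subset_Icc hk₁ (by linarith)

lemma IntervalMixing.exists_mem_iterate_image_of_isAccessible (hmix : IntervalMixing g)
    (hg : Continuous g) {δ y : ℝ} (hδ : 0 < δ) (hy : IsAccessible g y) :
    ∃ N : ℕ, ∀ a b : ℝ, 0 ≤ a → a + δ ≤ b → b ≤ 1 → ∀ n ≥ N, y ∈ g^[n] '' Icc a b := by
  obtain ⟨p, ⟨hp0, hp1⟩, k, rfl⟩ := hy
  obtain ⟨N, hN⟩ := hmix.exists_Icc_subset_iterate_image_of_le hg hδ
    (lt_min hp0 (sub_pos.2 hp1)) ((min_le_left _ _).trans hp1.le)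
  refine ⟨N + k, fun a b ha hab hb n hn => ?_⟩
  have hp : p ∈ g^[n - k] '' Icc a b :=
    hN a b ha hab hb (n - k) (by omega) ⟨min_le_left _ _, by linarith [min_le_right p (1 - p)]⟩
  rw [show n = k + (n - k) by omega, iterate_add, image_comp]
  exact mem_image_of_mem _ hp

lemma IntervalMixing.exists_covered_Icc (hmix : IntervalMixing g)
    (hg : Continuous g) {δ τ : ℝ} (hδ : 0 < δ) (hτ : 0 < τ) (hτ2 : τ < 1 / 2) :
    ∃ (lo hi : ℝ) (N : ℕ), 0 ≤ lo ∧ lo ≤ τ ∧ 1 - τ ≤ hi ∧ hi ≤ 1 ∧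
      (IsAccessible g 0 → lo = 0) ∧ (IsAccessible g 1 → hi = 1) ∧
      ∀ a b : ℝ, 0 ≤ a → a + δ ≤ b → b ≤ 1 → ∀ n ≥ N, Icc lo hi ⊆ g^[n] '' Icc a b := by
  classical
  obtain ⟨N, hN⟩ := hmix.exists_Icc_subset_iterate_image_of_le hg hδ hτ (by linarith)
  have hend : ∀ y c, c ∈ Icc τ (1 - τ) → ∃ N' : ℕ, ∀ a b : ℝ, 0 ≤ a → a + δ ≤ b → b ≤ 1 →
      ∀ n ≥ N', (if IsAccessible g y then y else c) ∈ g^[n] '' Icc a b := by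
    intro y c hc
    split_ifs with hy
    · exact hmix.exists_mem_iterate_image_of_isAccessible hg hδ hy
    · exact ⟨N, fun a b ha hab hb n hn => hN a b ha hab hb n hn hc⟩
  obtain ⟨N₀, hN₀⟩ := hend 0 τ ⟨le_rfl, by linarith⟩
  obtain ⟨N₁, hN₁⟩ := hend 1 (1 - τ) ⟨by linarith, le_rfl⟩
  refine ⟨if IsAccessible g 0 then 0 else τ, if IsAccessible g 1 then 1 else 1 - τ, max N₀ N₁,
    by split_ifs <;> linarith, by split_ifs <;> linarith, by split_ifs <;> linarith,
    by split_ifs <;> linarith, fun h => if_pos h, fun h => if_pos h,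
    fun a b ha hab hb n hn => ?_⟩
  exact ((isIcc_Icc (by linarith)).image (hg.iterate n)).Icc_subset
    (hN₀ a b ha hab hb n (le_of_max_le_left hn)) (hN₁ a b ha hab hb n (le_of_max_le_right hn))

/-! ### Seeds and shadowing schemes -/

def IsSeed (g : ℝ → ℝ) (δ : ℝ) (D : Set ℝ) : Prop :=
  ∃ a b : ℝ, 0 ≤ a ∧ a + δ ≤ b ∧ b ≤ 1 ∧ ∃ r : ℕ, g^[r] '' Icc a b ⊆ D

lemma isSeed_Icc {δ a b : ℝ} (ha : 0 ≤ a) (hab : a + δ ≤ b) (hb : b ≤ 1) :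
    IsSeed g δ (Icc a b) :=
  ⟨a, b, ha, hab, hb, 0, by simp⟩

lemma IsSeed.image {δ : ℝ} {D : Set ℝ} (hD : IsSeed g δ D) : IsSeed g δ (g '' D) := by
  obtain ⟨a, b, ha, hab, hb, r, hr⟩ := hD
  exact ⟨a, b, ha, hab, hb, r + 1, by rw [iterate_succ', image_comp]; exact image_mono hr⟩

lemma IsSeed.mono {δ : ℝ} {D D' : Set ℝ} (hD : IsSeed g δ D) (h : D ⊆ D') : IsSeed g δ D' := by
  obtain ⟨a, b, ha, hab, hb, r, hr⟩ := hD
  exact ⟨a, b, ha, hab, hb, r, hr.trans h⟩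

/-- Inside an interval `T ⊆ [0, 1]` through `x`, either `T` itself is `ε`-close to `x`, or `T`
contains a segment of length `ε` ending at `x`, which is a seed. -/
lemma IsIcc.exists_isSeed_subset {δ ε x : ℝ} {T : Set ℝ} (hT : IsIcc T) (hT01 : T ⊆ Icc 0 1)
    (hx : x ∈ T) (hδ : 0 ≤ δ) (hδε : δ ≤ ε)
    (hseed : T ⊆ Icc (x - ε) (x + ε) → IsSeed g δ T) :
    ∃ D ⊆ T, IsIcc D ∧ D ⊆ Icc (x - ε) (x + ε) ∧ x ∈ D ∧ IsSeed g δ D := by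
  by_cases hnear : T ⊆ Icc (x - ε) (x + ε)
  · exact ⟨T, subset_rfl, hT, hnear, hx, hseed hnear⟩
  obtain ⟨w, hwT, hw⟩ := not_subset.1 hnear
  have hD : IsIcc (T ∩ Icc (x - ε) (x + ε)) := by
    obtain ⟨c, d, -, rfl⟩ := hT
    rw [Icc_inter_Icc]
    have := hx.1; have := hx.2
    exact isIcc_Icc
      (le_min (max_le (by linarith) (by linarith)) (max_le (by linarith) (by linarith)))
  refine ⟨_, inter_subset_left, hD, inter_subset_right, ⟨hx, by constructor <;> linarith⟩, ?_⟩
  rcases not_and_or.1 hw with hw | hw <;> rw [not_le] at hw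
  · have hseg : Icc (x - ε) x ⊆ T :=
      (Icc_subset_Icc_left hw.le).trans (hT.Icc_subset hwT hx)
    exact (isSeed_Icc (hT01 (hseg (left_mem_Icc.2 (by linarith)))).1 (by linarith)
      (hT01 hx).2).mono (subset_inter hseg (Icc_subset_Icc le_rfl (by linarith)))
  · have hseg : Icc x (x + ε) ⊆ T :=
      (Icc_subset_Icc_right hw.le).trans (hT.Icc_subset hx hwT)
    exact (isSeed_Icc (hT01 hx).1 (by linarith)
      (hT01 (hseg (right_mem_Icc.2 (by linarith)))).2).mono
      (subset_inter hseg (Icc_subset_Icc (by linarith) le_rfl))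

/-- Data for shadowing orbit segments of `g` by chains of intervals. Points of `[0, 1]` outside
`region` lie in `[lo, hi]`, which every interval of length `δ` covers after `N` steps. The set
`region` surrounds the endpoints that are not accessible; there the interval `K x` is used, and
these intervals cover each other along orbits that stay in `region`. -/
structure ShadowingScheme (g : ℝ → ℝ) (ε : ℝ) where
  lo : ℝ
  hi : ℝ
  δ : ℝ
  N : ℕ
  region : Set ℝ
  K : ℝ → Set ℝ
  δ_pos : 0 < δ
  δ_le : δ ≤ ε
  zero_le_lo : 0 ≤ lo
  lo_add_δ_le : lo + δ ≤ hi
  hi_le_one : hi ≤ 1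
  covers : ∀ a b : ℝ, 0 ≤ a → a + δ ≤ b → b ≤ 1 → ∀ n ≥ N, Icc lo hi ⊆ g^[n] '' Icc a b
  isIcc_K : ∀ x ∈ region, IsIcc (K x)
  K_subset : ∀ x ∈ region, K x ⊆ Icc lo hi
  K_subset_Icc : ∀ x ∈ region, K x ⊆ Icc (x - ε) (x + ε)
  isSeed_K : ∀ x ∈ region, IsSeed g δ (K x)
  K_subset_image : ∀ x ∈ region, g x ∈ region → K (g x) ⊆ g '' K x
  mem_image_K : ∀ x ∈ region, g x ∉ region → g x ∈ g '' K x
  mem_Icc : ∀ y ∈ Icc (0 : ℝ) 1, y ∉ region → y ∈ Icc lo hi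

namespace ShadowingScheme

variable {ε : ℝ} (S : ShadowingScheme g ε)

lemma Icc_subset_unitInterval : Icc S.lo S.hi ⊆ Icc 0 1 :=
  Icc_subset_Icc S.zero_le_lo S.hi_le_one

lemma Icc_subset_iterate_image {D : Set ℝ} (hD : IsSeed g S.δ D) {n : ℕ} (hn : S.N ≤ n) :
    Icc S.lo S.hi ⊆ g^[n] '' D := by
  obtain ⟨a, b, ha, hab, hb, r, hr⟩ := hD
  refine (S.covers a b ha hab hb (n + r) (by omega)).trans ?_
  rw [iterate_add, image_comp]
  exact image_mono hr

/-- The invariant kept along an orbit segment; in `region` the interval `K x` need not contain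
`x`. -/
def Tracks (D : Set ℝ) (x : ℝ) : Prop :=
  IsIcc D ∧ D ⊆ Icc 0 1 ∧ D ⊆ Icc (x - ε) (x + ε) ∧ IsSeed g S.δ D ∧
    ((x ∈ S.region ∧ D = S.K x) ∨ x ∈ D)

lemma exists_tracks_of_mem (x : ℝ) (hx : x ∈ Icc (0 : ℝ) 1) :
    ∃ D ⊆ Icc S.lo S.hi, S.Tracks D x := by
  by_cases hreg : x ∈ S.region
  · exact ⟨S.K x, S.K_subset x hreg, S.isIcc_K x hreg,
      (S.K_subset x hreg).trans S.Icc_subset_unitInterval, S.K_subset_Icc x hreg,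
      S.isSeed_K x hreg, Or.inl ⟨hreg, rfl⟩⟩
  obtain ⟨D, hDsub, hD, hDx, hxD, hseed⟩ :=
    (isIcc_Icc (S.lo_add_δ_le.trans' (by linarith [S.δ_pos]))).exists_isSeed_subset
      S.Icc_subset_unitInterval (S.mem_Icc x hx hreg) S.δ_pos.le S.δ_le fun _ =>
      isSeed_Icc S.zero_le_lo S.lo_add_δ_le S.hi_le_one
  exact ⟨D, hDsub, hD, hDsub.trans S.Icc_subset_unitInterval, hDx, hseed, Or.inr hxD⟩

lemma Tracks.exists_subset_image {S : ShadowingScheme g ε} (hg : Continuous g)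
    (hm : MapsTo g (Icc 0 1) (Icc 0 1)) {D : Set ℝ} {x : ℝ} (h : S.Tracks D x) :
    ∃ D' ⊆ g '' D, S.Tracks D' (g x) := by
  obtain ⟨hD, hD01, -, hseed, hmode⟩ := h
  by_cases hnext : g x ∈ S.region ∧ x ∈ S.region ∧ D = S.K x
  · obtain ⟨hgx, hreg, rfl⟩ := hnext
    exact ⟨S.K (g x), S.K_subset_image x hreg hgx, S.isIcc_K _ hgx,
      (S.K_subset _ hgx).trans S.Icc_subset_unitInterval, S.K_subset_Icc _ hgx,
      S.isSeed_K _ hgx, Or.inl ⟨hgx, rfl⟩⟩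
  have hgxD : g x ∈ g '' D := by
    rcases hmode with ⟨hreg, rfl⟩ | hxD
    · exact S.mem_image_K x hreg fun hgx => hnext ⟨hgx, hreg, rfl⟩
    · exact mem_image_of_mem g hxD
  obtain ⟨D', hD'sub, hD', hD'x, hxD', hseed'⟩ := (hD.image hg).exists_isSeed_subset
    (hm.image_subset.trans' (image_mono hD01)) hgxD S.δ_pos.le S.δ_le fun _ => hseed.image
  exact ⟨D', hD'sub, hD', hD'sub.trans (hm.image_subset.trans' (image_mono hD01)), hD'x, hseed',
    Or.inr hxD'⟩

lemma exists_chain_of_orbit (hg : Continuous g) (hm : MapsTo g (Icc 0 1) (Icc 0 1))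
    (x : ℕ → ℝ) (L : ℕ) (hx : x 0 ∈ Icc (0 : ℝ) 1) (horb : ∀ t < L, g (x t) = x (t + 1)) :
    ∃ D, D 0 ⊆ Icc S.lo S.hi ∧ IsIccChain g D L ∧
      (∀ t ≤ L, D t ⊆ Icc (x t - ε) (x t + ε)) ∧ IsSeed g S.δ (D L) := by
  obtain ⟨D₀, hD₀, htr₀⟩ := S.exists_tracks_of_mem (x 0) hx
  obtain ⟨D, rfl, hQ, hR⟩ := exists_seq_of_forall_exists (Q := fun t D => S.Tracks D (x t))
    (R := fun D D' => D' ⊆ g '' D) htr₀ fun t ht D hD => by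
      obtain ⟨D', hD'sub, hD'⟩ := hD.exists_subset_image hg hm
      exact ⟨D', horb t ht ▸ hD', hD'sub⟩
  exact ⟨D, hD₀, ⟨fun t ht => (hQ t ht).1, hR⟩, fun t ht => (hQ t ht).2.2.1,
    (hQ L le_rfl).2.2.2.1⟩

lemma exists_chain_extension (hg : Continuous g) (hm : MapsTo g (Icc 0 1) (Icc 0 1))
    {C : ℕ → Set ℝ} {K : ℕ} (hC : IsIccChain g C K) (hseed : IsSeed g S.δ (C K))
    (y : ℕ → ℝ) (hy : ∀ j, g (y (j + 1)) = y j) {a b c : ℕ} (hyb : y b ∈ Icc (0 : ℝ) 1)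
    (hab : a ≤ b) (hbc : b ≤ c) (hK : K + S.N < c - b) :
    ∃ C', IsIccChain g C' (c - a) ∧ (∀ k ≤ K, C' k = C k) ∧
      (∀ j, a ≤ j → j ≤ b → C' (c - j) ⊆ Icc (y j - ε) (y j + ε)) ∧
      IsSeed g S.δ (C' (c - a)) := by
  have horb : ∀ t < b - a, g (y (b - t)) = y (b - (t + 1)) := fun t ht => by
    have := hy (b - (t + 1))
    rwa [show b - (t + 1) + 1 = b - t by omega] at this
  obtain ⟨D, hD₀, hD, hDy, hDseed⟩ :=
    S.exists_chain_of_orbit hg hm (fun t => y (b - t)) (b - a) (by simpa using hyb) horb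
  obtain ⟨E, hE, hEC, hED⟩ := hC.exists_join (m := c - b - K) hg hD (by omega)
    (hD₀.trans (S.Icc_subset_iterate_image hseed (by omega)))
  refine ⟨E, ?_, hEC, fun j hj hj' => ?_, ?_⟩
  · rwa [show K + (c - b - K) + (b - a) = c - a by omega] at hE
  · have := hDy (b - j) (by omega)
    rwa [← hED, show K + (c - b - K) + (b - j) = c - j by omega,
      show b - (b - j) = j by omega] at this
  · rw [show c - a = K + (c - b - K) + (b - a) by omega, hED]
    exact hDseed

lemma exists_chain_of_windows (hg : Continuous g) (hm : MapsTo g (Icc 0 1) (Icc 0 1)) (n : ℕ)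
    (o : Fin (n + 1) → ℕ → ℝ) (a b : Fin (n + 1) → ℕ) (ho : ∀ i j, o i j ∈ Icc (0 : ℝ) 1)
    (horb : ∀ i j, g (o i (j + 1)) = o i j) (hab : ∀ i, a i ≤ b i)
    (hgap : ∀ i : Fin n, b i.castSucc + S.N < a i.succ) (c : ℕ)
    (hc : b (Fin.last n) + S.N < c) :
    ∃ C, IsIccChain g C (c - a 0) ∧ C 0 = Icc S.lo S.hi ∧
      (∀ i j, a i ≤ j → j ≤ b i → C (c - j) ⊆ Icc (o i j - ε) (o i j + ε)) ∧
      IsSeed g S.δ (C (c - a 0)) := by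
  have hbc : ∀ i, b i ≤ c := fun i =>
    ((Fin.monotone_of_le_of_lt hab hgap).2 (Fin.le_last i)).trans (by omega)
  induction n with
  | zero =>
    obtain ⟨C, hC, hCl, hCw, hCseed⟩ := S.exists_chain_extension hg hm
      (C := fun _ => Icc S.lo S.hi) (K := 0)
      ⟨fun _ _ => isIcc_Icc (by linarith [S.lo_add_δ_le, S.δ_pos]), fun _ h => absurd h
        (Nat.not_lt_zero _)⟩ (isSeed_Icc S.zero_le_lo S.lo_add_δ_le S.hi_le_one)
      (o 0) (horb 0) (ho 0 _) (hab 0) (hbc 0) (by rw [Fin.last_zero] at hc; omega)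
    refine ⟨C, hC, hCl 0 le_rfl, fun i => ?_, hCseed⟩
    obtain rfl := Fin.fin_one_eq_zero i
    exact hCw
  | succ n ih =>
    obtain ⟨C, hC, hC₀, hCw, hCseed⟩ := ih (fun i => o i.succ) (fun i => a i.succ)
      (fun i => b i.succ) (fun i => ho _) (fun i => horb _) (fun i => hab _)
      (fun i => by have := hgap i.succ; rwa [← Fin.succ_castSucc] at this)
      (by simpa [Fin.succ_last]) (fun i => hbc _)
    obtain ⟨C', hC', hC'C, hC'w, hC'seed⟩ := S.exists_chain_extension hg hm hC hCseed (o 0)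
      (horb 0) (ho 0 _) (hab 0) (hbc 0) (by
        have := hgap 0; have := hab (Fin.succ 0); have := hbc (Fin.succ 0)
        rw [Fin.castSucc_zero] at *; omega)
    refine ⟨C', hC', by rw [hC'C 0 (Nat.zero_le _), hC₀], fun i j hj hj' => ?_, hC'seed⟩
    cases i using Fin.cases with
    | zero => exact hC'w j hj hj'
    | succ i =>
      have := (Fin.monotone_of_le_of_lt hab hgap).1 (Fin.succ_le_succ_iff.2 (Fin.zero_le i))
      rw [hC'C (c - j) (by omega)]
      exact hCw i j hj hj'

/-- The chain through all windows is closed up by `N + 1` further iterates, because it ends in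
a seed; a periodic point following the closed chain shadows every window. -/
lemma exists_isPeriodicPt_shadowing (hg : Continuous g) (hm : MapsTo g (Icc 0 1) (Icc 0 1))
    (n : ℕ) (o : Fin (n + 1) → ℕ → ℝ) (a b : Fin (n + 1) → ℕ)
    (ho : ∀ i j, o i j ∈ Icc (0 : ℝ) 1) (horb : ∀ i j, g (o i (j + 1)) = o i j)
    (hab : ∀ i, a i ≤ b i) (hgap : ∀ i : Fin n, b i.castSucc + (2 * S.N + 2) < a i.succ)
    (P : ℕ) (hP : 2 * S.N + 2 + b (Fin.last n) - a 0 < P) :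
    ∃ p c, p ∈ Icc (0 : ℝ) 1 ∧ IsPeriodicPt g P p ∧
      ∀ i j, a i ≤ j → j ≤ b i → j ≤ c ∧ g^[c - j] p ∈ Icc (o i j - ε) (o i j + ε) := by
  have hb := (Fin.monotone_of_le_of_lt hab hgap).2
  have ha0 : a 0 ≤ b (Fin.last n) := (hab 0).trans (hb (Fin.zero_le _))
  set c := a 0 + P - (S.N + 1)
  obtain ⟨C, hC, hC₀, hCw, hCseed⟩ := S.exists_chain_of_windows hg hm n o a b ho horb hab
    (fun i => (hgap i).trans' (by omega)) c (by omega)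
  obtain ⟨E, hE, hEC, hED⟩ := hC.exists_join (D := fun _ => g^[S.N + 1] '' C (c - a 0))
    (L := 0) hg ⟨fun _ _ => (hC.1 _ le_rfl).image (hg.iterate _), fun _ h => absurd h
      (Nat.not_lt_zero _)⟩ (Nat.succ_pos S.N) subset_rfl
  have hEP := hED 0
  rw [show c - a 0 + (S.N + 1) + 0 = P by omega] at hE hEP
  have hE₀ : E 0 = Icc S.lo S.hi := (hEC 0 (Nat.zero_le _)).trans hC₀
  obtain ⟨p, hp, hpE⟩ := hE.exists_isPeriodicPt hg
    (by rw [hE₀, hEP]; exact S.Icc_subset_iterate_image hCseed (Nat.le_succ _))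
  refine ⟨p, c, S.Icc_subset_unitInterval (hE₀ ▸ hpE 0 (Nat.zero_le P)), hp,
    fun i j hj hj' => ⟨?_, ?_⟩⟩
  · have := hb (Fin.le_last i); omega
  · have := (Fin.monotone_of_le_of_lt hab hgap).1 (Fin.zero_le i)
    have := hb (Fin.le_last i)
    have hmem := hpE (c - j) (by omega)
    rw [hEC _ (by omega)] at hmem
    exact hCw i j hj hj' hmem

end ShadowingScheme

/-! ### The endpoints of `[0, 1]` -/

def IsTotallyInvariant (g : ℝ → ℝ) (y : ℝ) : Prop := ∀ x ∈ Icc (0 : ℝ) 1, g x = y ↔ x = y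

def IsSwap (g : ℝ → ℝ) : Prop := ∀ x ∈ Icc (0 : ℝ) 1, (g x = 0 ↔ x = 1) ∧ (g x = 1 ↔ x = 0)

def mirror (g : ℝ → ℝ) : ℝ → ℝ := fun x => 1 - g (1 - x)

lemma iterate_mirror (n : ℕ) (x : ℝ) : (mirror g)^[n] x = 1 - g^[n] (1 - x) := by
  induction n generalizing x with
  | zero => simp
  | succ n ih => rw [iterate_succ_apply, iterate_succ_apply, ih, mirror, sub_sub_cancel]

lemma continuous_mirror (hg : Continuous g) : Continuous (mirror g) := by
  unfold mirror; fun_prop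

lemma mapsTo_mirror (hm : MapsTo g (Icc 0 1) (Icc 0 1)) :
    MapsTo (mirror g) (Icc 0 1) (Icc 0 1) :=
  fun _ hx => Icc.one_sub_mem (hm (Icc.one_sub_mem hx))

lemma surjOn_mirror (hs : SurjOn g (Icc 0 1) (Icc 0 1)) : SurjOn (mirror g) (Icc 0 1) (Icc 0 1) :=
  fun y hy => by
    obtain ⟨x, hx, hxy⟩ := hs (Icc.one_sub_mem hy)
    exact ⟨1 - x, Icc.one_sub_mem hx, by rw [mirror, sub_sub_cancel, hxy, sub_sub_cancel]⟩

lemma IntervalMixing.mirror (hmix : IntervalMixing g) : IntervalMixing (mirror g) := by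
  intro l₁ r₁ l₂ r₂ h1 h2 h3 h4 h5 h6
  obtain ⟨N, hN⟩ := hmix (1 - r₁) (1 - l₁) (1 - r₂) (1 - l₂)
    (by linarith) (by linarith) (by linarith) (by linarith) (by linarith) (by linarith)
  refine ⟨N, fun n hn => ?_⟩
  obtain ⟨y, hy, hny⟩ := hN n hn
  refine ⟨1 - y, ⟨by linarith [hy.2], by linarith [hy.1]⟩, ?_⟩
  rw [iterate_mirror, sub_sub_cancel]
  exact ⟨by linarith [hny.2], by linarith [hny.1]⟩

lemma IsAccessible.of_mirror (h : IsAccessible (mirror g) 0) : IsAccessible g 1 := by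
  obtain ⟨p, hp, k, hk⟩ := h
  exact ⟨1 - p, Ioo.one_sub_mem hp, k, by rw [iterate_mirror, sub_eq_zero] at hk; exact hk.symm⟩

lemma mirror_eq_zero_iff {x : ℝ} : mirror g x = 0 ↔ g (1 - x) = 1 := by
  rw [mirror, sub_eq_zero, eq_comm]

lemma mirror_eq_one_iff {x : ℝ} : mirror g x = 1 ↔ g (1 - x) = 0 := by
  simp [mirror]

lemma isTotallyInvariant_mirror_zero :
    IsTotallyInvariant (mirror g) 0 ↔ IsTotallyInvariant g 1 := by
  refine ⟨fun h x hx => ?_, fun h x hx => ?_⟩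
  · have := h (1 - x) (Icc.one_sub_mem hx)
    rw [mirror_eq_zero_iff, sub_sub_cancel] at this
    rw [this, sub_eq_zero, eq_comm]
  · rw [mirror_eq_zero_iff, h _ (Icc.one_sub_mem hx), sub_eq_self]

lemma IsSwap.of_mirror (h : IsSwap (mirror g)) : IsSwap g := fun x hx => by
  have := h (1 - x) (Icc.one_sub_mem hx)
  rw [mirror_eq_zero_iff, mirror_eq_one_iff, sub_sub_cancel, sub_eq_self, sub_eq_zero] at this
  exact ⟨this.2.trans eq_comm, this.1⟩

lemma eq_zero_or_eq_one_of_not_isAccessible {y : ℝ} (hy : ¬ IsAccessible g y) {k : ℕ} {x : ℝ}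
    (hx : x ∈ Icc (0 : ℝ) 1) (h : g^[k] x = y) : x = 0 ∨ x = 1 := by
  by_contra! hne
  exact hy ⟨x, ⟨hx.1.lt_of_ne' hne.1, hx.2.lt_of_ne hne.2⟩, k, h⟩

lemma isTotallyInvariant_zero_or_isSwap (hs : SurjOn g (Icc 0 1) (Icc 0 1))
    (h0 : ¬ IsAccessible g 0) : IsTotallyInvariant g 0 ∨ IsSwap g := by
  have hpre := fun k x (hx : x ∈ Icc (0 : ℝ) 1) =>
    eq_zero_or_eq_one_of_not_isAccessible h0 (k := k) hx
  obtain ⟨x₀, hx₀, hgx₀⟩ := hs (left_mem_Icc.2 zero_le_one)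
  obtain ⟨x₁, hx₁, hgx₁⟩ := hs (right_mem_Icc.2 zero_le_one)
  by_cases hg0 : g 0 = 0
  · refine Or.inl fun x hx => ⟨fun hgx => ?_, fun h => h ▸ hg0⟩
    rcases hpre 1 x hx hgx with rfl | rfl
    · rfl
    rcases hpre 2 x₁ hx₁ (show g (g x₁) = 0 by rw [hgx₁, hgx]) with rfl | rfl
    · simp [hg0] at hgx₁
    · simp [hgx] at hgx₁
  have hg1 : g 1 = 0 := by
    rcases hpre 1 x₀ hx₀ hgx₀ with rfl | rfl
    exacts [absurd hgx₀ hg0, hgx₀]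
  have hpre₁ : ∀ x ∈ Icc (0 : ℝ) 1, g x = 1 → x = 0 ∨ x = 1 :=
    fun x hx h => hpre 2 x hx (show g (g x) = 0 by rw [h, hg1])
  have hg0' : g 0 = 1 := by
    rcases hpre₁ x₁ hx₁ hgx₁ with rfl | rfl
    exacts [hgx₁, by simp [hg1] at hgx₁]
  refine Or.inr fun x hx => ⟨⟨fun h => (hpre 1 x hx h).resolve_left ?_, fun h => h ▸ hg1⟩,
    ⟨fun h => (hpre₁ x hx h).resolve_right ?_, fun h => h ▸ hg0'⟩⟩
  · rintro rfl; simp [hg0'] at h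
  · rintro rfl; simp [hg1] at h

lemma isTotallyInvariant_one_or_isSwap (hs : SurjOn g (Icc 0 1) (Icc 0 1))
    (h1 : ¬ IsAccessible g 1) : IsTotallyInvariant g 1 ∨ IsSwap g :=
  (isTotallyInvariant_zero_or_isSwap (surjOn_mirror hs) fun h => h1 h.of_mirror).imp
    isTotallyInvariant_mirror_zero.1 IsSwap.of_mirror

lemma isSwap_or_isAccessible_or_isTotallyInvariant (hs : SurjOn g (Icc 0 1) (Icc 0 1)) :
    IsSwap g ∨ ((IsAccessible g 0 ∨ IsTotallyInvariant g 0) ∧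
      (IsAccessible g 1 ∨ IsTotallyInvariant g 1)) := by
  by_cases hsw : IsSwap g
  · exact Or.inl hsw
  refine Or.inr ⟨?_, ?_⟩
  · by_cases h0 : IsAccessible g 0
    · exact Or.inl h0
    · exact Or.inr ((isTotallyInvariant_zero_or_isSwap hs h0).resolve_right hsw)
  · by_cases h1 : IsAccessible g 1
    · exact Or.inl h1
    · exact Or.inr ((isTotallyInvariant_one_or_isSwap hs h1).resolve_right hsw)

/-- `ρ` is the first point at which `g` reaches `α`; mixing forces `ρ ≤ α`. -/
lemma IntervalMixing.exists_first_ge (hmix : IntervalMixing g) (hg : Continuous g)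
    (hm : MapsTo g (Icc 0 1) (Icc 0 1)) (hs : SurjOn g (Icc 0 1) (Icc 0 1)) (h0 : g 0 = 0)
    {α : ℝ} (hα : 0 < α) (hα1 : α < 1) :
    ∃ ρ, 0 < ρ ∧ ρ ≤ α ∧ (∀ x ∈ Ico 0 ρ, g x < α) ∧ α ≤ g ρ := by
  obtain ⟨x₁, hx₁, hgx₁⟩ := hs (right_mem_Icc.2 zero_le_one)
  obtain ⟨ρ, ⟨⟨hρ0, hρ1⟩, hρ⟩, hmin⟩ :=
    (isCompact_Icc.inter_right (isClosed_le continuous_const hg)).exists_isLeast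
      (⟨x₁, hx₁, show α ≤ g x₁ by rw [hgx₁]; exact hα1.le⟩ : (Icc 0 1 ∩ {x | α ≤ g x}).Nonempty)
  have hbelow : ∀ x ∈ Ico 0 ρ, g x < α := fun x hx => by
    by_contra! h
    exact (hmin ⟨⟨hx.1, hx.2.le.trans hρ1⟩, h⟩).not_gt hx.2
  have hpos : 0 < ρ := hρ0.lt_of_ne <| by
    rintro rfl
    exact hα.not_ge (h0 ▸ hρ)
  refine ⟨ρ, hpos, ?_, hbelow, hρ⟩
  by_contra! hαρ
  exact hmix.not_mapsTo_Icc_left hα hα1 fun x hx =>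
    ⟨(hm ⟨hx.1, hx.2.trans hα1.le⟩).1, (hbelow x ⟨hx.1, hx.2.trans_lt hαρ⟩).le⟩

/-- If no `[l, α]` with small `l > 0` had a point mapped to `≤ l`, then `g x > min x β` on
`(0, α]`, and `[min β m, 1]` would be invariant, where `m > 0` is the minimum of `g` on `[α, 1]`. -/
lemma IntervalMixing.exists_Icc_subset_image_Icc (hmix : IntervalMixing g) (hg : Continuous g)
    (hm : MapsTo g (Icc 0 1) (Icc 0 1)) (hz : IsTotallyInvariant g 0) {α β ρ : ℝ}
    (hα1 : α < 1) (hβ : 0 < β) (hβρ : β ≤ ρ) (hρα : ρ ≤ α) (hgρ : α ≤ g ρ) :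
    ∃ l, 0 < l ∧ l ≤ β ∧ Icc l α ⊆ g '' Icc l α := by
  have hα : 0 < α := by linarith
  obtain ⟨x₀, hx₀, hmin⟩ :=
    isCompact_Icc.exists_isMinOn (nonempty_Icc.2 hα1.le) hg.continuousOn (f := g)
  have hx₀' : x₀ ∈ Icc (0 : ℝ) 1 := ⟨hα.le.trans hx₀.1, hx₀.2⟩
  have hm₀ : 0 < g x₀ := (hm hx₀').1.lt_of_ne fun h => by
    have := (hz x₀ hx₀').1 h.symm
    linarith [hx₀.1]
  obtain ⟨l, ⟨hl0, hlβ⟩, y, hy, hgy⟩ : ∃ l ∈ Ioc 0 β, ∃ y ∈ Icc l α, g y ≤ l := by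
    by_contra! hcon
    refine hmix.not_mapsTo_Icc_right (lt_min hβ hm₀) ((min_le_left _ _).trans_lt (by linarith))
      fun x hx => ⟨?_, (hm ⟨(lt_min hβ hm₀).le.trans hx.1, hx.2⟩).2⟩
    rcases le_or_gt x α with hxα | hxα
    · exact (le_min hx.1 (min_le_left _ _)).trans (hcon (min x β)
        ⟨lt_min ((lt_min hβ hm₀).trans_le hx.1) hβ, min_le_right _ _⟩ x
        ⟨min_le_left _ _, hxα⟩).le
    · exact (min_le_right _ _).trans (hmin ⟨hxα.le, hx.2⟩)
  refine ⟨l, hl0, hlβ, (Icc_subset_Icc hgy hgρ).trans ?_⟩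
  exact ((isIcc_Icc (hlβ.trans (hβρ.trans hρα))).image hg).Icc_subset (mem_image_of_mem g hy)
    (mem_image_of_mem g ⟨hlβ.trans hβρ, hρα⟩)

/-- `[l, e]` serves as the shadowing interval for orbit points in `[0, θ]`. -/
def LeftGadget (g : ℝ → ℝ) (e θ l : ℝ) : Prop :=
  0 < l ∧ l ≤ θ ∧ 2 * θ ≤ e ∧ MapsTo g (Icc 0 θ) (Icc 0 e) ∧ Icc l e ⊆ g '' Icc l e

def RightGadget (g : ℝ → ℝ) (e θ l : ℝ) : Prop :=
  0 < l ∧ l ≤ θ ∧ 2 * θ ≤ e ∧ MapsTo g (Icc (1 - θ) 1) (Icc (1 - e) 1) ∧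
    Icc (1 - e) (1 - l) ⊆ g '' Icc (1 - e) (1 - l)

lemma IntervalMixing.exists_leftGadget (hmix : IntervalMixing g) (hg : Continuous g)
    (hm : MapsTo g (Icc 0 1) (Icc 0 1)) (hs : SurjOn g (Icc 0 1) (Icc 0 1))
    (hz : IsTotallyInvariant g 0) {e : ℝ} (he : 0 < e) (he1 : e < 1) :
    ∃ θ l, LeftGadget g e θ l := by
  obtain ⟨ρ, hρ0, hρe, hbelow, hgρ⟩ :=
    hmix.exists_first_ge hg hm hs ((hz 0 (left_mem_Icc.2 zero_le_one)).2 rfl) he he1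
  obtain ⟨l, hl0, hlθ, hcov⟩ :=
    hmix.exists_Icc_subset_image_Icc hg hm hz he1 (half_pos hρ0) (half_le_self hρ0.le) hρe hgρ
  exact ⟨ρ / 2, l, hl0, hlθ, by linarith, fun x hx =>
    ⟨(hm ⟨hx.1, by linarith [hx.2]⟩).1, (hbelow x ⟨hx.1, by linarith [hx.2]⟩).le⟩, hcov⟩

lemma LeftGadget.of_mirror {e θ l : ℝ} (h : LeftGadget (mirror g) e θ l) :
    RightGadget g e θ l := by
  obtain ⟨hl, hlθ, hθe, hmaps, hcov⟩ := h
  refine ⟨hl, hlθ, hθe, fun x hx => ?_, fun y hy => ?_⟩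
  · have := hmaps (show 1 - x ∈ Icc 0 θ from ⟨by linarith [hx.2], by linarith [hx.1]⟩)
    rw [mirror, sub_sub_cancel] at this
    exact ⟨by linarith [this.2], by linarith [this.1]⟩
  · obtain ⟨z, hz, hzy⟩ := hcov (show 1 - y ∈ Icc l e from ⟨by linarith [hy.2], by linarith [hy.1]⟩)
    rw [mirror, sub_right_inj] at hzy
    exact ⟨1 - z, ⟨by linarith [hz.2], by linarith [hz.1]⟩, hzy⟩

lemma IntervalMixing.exists_rightGadget (hmix : IntervalMixing g) (hg : Continuous g)
    (hm : MapsTo g (Icc 0 1) (Icc 0 1)) (hs : SurjOn g (Icc 0 1) (Icc 0 1))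
    (hz : IsTotallyInvariant g 1) {e : ℝ} (he : 0 < e) (he1 : e < 1) :
    ∃ θ l, RightGadget g e θ l := by
  obtain ⟨θ, l, h⟩ := hmix.mirror.exists_leftGadget (continuous_mirror hg) (mapsTo_mirror hm)
    (surjOn_mirror hs) (isTotallyInvariant_mirror_zero.2 hz) he he1
  exact ⟨θ, l, h.of_mirror⟩

lemma exists_mapsTo_Icc_one_of_apply_zero (hg : Continuous g) (hm : MapsTo g (Icc 0 1) (Icc 0 1))
    (h : g 0 = 1) {η : ℝ} (hη : 0 < η) (hη1 : η ≤ 1) :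
    ∃ δ, 0 < δ ∧ δ ≤ η ∧ MapsTo g (Icc 0 δ) (Icc (1 - η) 1) := by
  obtain ⟨r, hr, hball⟩ := Metric.eventually_nhds_iff.1
    (hg.continuousAt.eventually_mem (Ioi_mem_nhds (show 1 - η < g 0 by linarith)))
  refine ⟨min (r / 2) η, lt_min (half_pos hr) hη, min_le_right _ _, fun x hx =>
    ⟨(hball ?_).le, (hm ⟨hx.1, hx.2.trans ((min_le_right _ _).trans hη1)⟩).2⟩⟩
  rw [Real.dist_eq, sub_zero, abs_of_nonneg hx.1]
  linarith [min_le_left (r / 2) η, hx.2]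

lemma exists_mapsTo_Icc_zero_of_apply_one (hg : Continuous g) (hm : MapsTo g (Icc 0 1) (Icc 0 1))
    (h : g 1 = 0) {η : ℝ} (hη : 0 < η) (hη1 : η ≤ 1) :
    ∃ δ, 0 < δ ∧ δ ≤ η ∧ MapsTo g (Icc (1 - δ) 1) (Icc 0 η) := by
  obtain ⟨r, hr, hball⟩ := Metric.eventually_nhds_iff.1
    (hg.continuousAt.eventually_mem (Iio_mem_nhds (show g 1 < η by linarith)))
  refine ⟨min (r / 2) η, lt_min (half_pos hr) hη, min_le_right _ _, fun x hx =>
    ⟨(hm ⟨by linarith [hx.1, min_le_right (r / 2) η], hx.2⟩).1, (hball ?_).le⟩⟩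
  rw [Real.dist_eq, abs_of_nonpos (by linarith [hx.2])]
  linarith [min_le_left (r / 2) η, hx.1]

lemma IntervalMixing.comp_self (hmix : IntervalMixing g) : IntervalMixing (g ∘ g) := by
  intro l₁ r₁ l₂ r₂ h1 h2 h3 h4 h5 h6
  obtain ⟨N, hN⟩ := hmix l₁ r₁ l₂ r₂ h1 h2 h3 h4 h5 h6
  refine ⟨N, fun n hn => ?_⟩
  rw [show g ∘ g = g^[2] from rfl, ← iterate_mul]
  exact hN (2 * n) (by omega)

lemma IsSwap.isTotallyInvariant_comp_self (hsw : IsSwap g) (hm : MapsTo g (Icc 0 1) (Icc 0 1)) :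
    IsTotallyInvariant (g ∘ g) 0 := fun x hx =>
  ((hsw (g x) (hm hx)).1.trans (hsw x hx).2)

/-- `[l, σ]` and its image serve as the shadowing intervals for orbit points in `[0, θ₀]` and in
`[1 - θ₁, 1]` respectively. -/
def SwapGadget (g : ℝ → ℝ) (e θ₀ θ₁ σ l : ℝ) : Prop :=
  0 < l ∧ l ≤ θ₀ ∧ 2 * θ₀ ≤ σ ∧ σ ≤ e ∧ 0 < θ₁ ∧ θ₁ ≤ e ∧
    MapsTo g (Icc 0 θ₀) (Icc (1 - θ₁) 1) ∧ MapsTo g (Icc (1 - θ₁) 1) (Icc 0 σ) ∧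
    (∃ m < 1, g '' Icc l σ ⊆ Icc (1 - e) m) ∧ Icc l σ ⊆ g '' (g '' Icc l σ)

/-- The gadget comes from a `LeftGadget`-type construction for `g ∘ g`, which fixes `0`. -/
lemma IntervalMixing.exists_swapGadget (hmix : IntervalMixing g) (hg : Continuous g)
    (hm : MapsTo g (Icc 0 1) (Icc 0 1)) (hs : SurjOn g (Icc 0 1) (Icc 0 1)) (hsw : IsSwap g)
    {e : ℝ} (he : 0 < e) (he1 : e < 1) : ∃ θ₀ θ₁ σ l, SwapGadget g e θ₀ θ₁ σ l := by
  have h01 : g 0 = 1 := (hsw 0 (left_mem_Icc.2 zero_le_one)).2.2 rfl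
  have h10 : g 1 = 0 := (hsw 1 (right_mem_Icc.2 zero_le_one)).1.2 rfl
  obtain ⟨σ, hσ, hσe, hσmaps⟩ := exists_mapsTo_Icc_one_of_apply_zero hg hm h01 he he1.le
  obtain ⟨θ₁, hθ₁, hθ₁σ, hθ₁maps⟩ :=
    exists_mapsTo_Icc_zero_of_apply_one hg hm h10 hσ (by linarith)
  obtain ⟨β, hβ, -, hβmaps⟩ := exists_mapsTo_Icc_one_of_apply_zero hg hm h01 hθ₁ (by linarith)
  have hz := hsw.isTotallyInvariant_comp_self hm
  obtain ⟨ρ, hρ0, hρσ, -, hgρ⟩ := hmix.comp_self.exists_first_ge (hg.comp hg) (hm.comp hm)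
    (hs.comp hs) ((hz 0 (left_mem_Icc.2 zero_le_one)).2 rfl) hσ (by linarith)
  have hθ₀ρ : min (ρ / 2) β ≤ ρ / 2 := min_le_left _ _
  obtain ⟨l, hl0, hlθ₀, hcov⟩ := hmix.comp_self.exists_Icc_subset_image_Icc (hg.comp hg)
    (hm.comp hm) hz (by linarith) (lt_min (half_pos hρ0) hβ) (by linarith) hρσ hgρ
  have hlσ : l ≤ σ := by linarith
  obtain ⟨u, m, hum, him⟩ := (isIcc_Icc hlσ).image hg
  have hm1 : m < 1 := by
    obtain ⟨x, hx, hgx⟩ : m ∈ g '' Icc l σ := him ▸ right_mem_Icc.2 hum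
    have hx01 : x ∈ Icc (0 : ℝ) 1 := ⟨hl0.le.trans hx.1, by linarith [hx.2]⟩
    refine (hgx ▸ (hm hx01).2).lt_of_ne fun h => ?_
    linarith [hx.1, (hsw x hx01).2.1 (hgx.trans h)]
  refine ⟨min (ρ / 2) β, θ₁, σ, l, hl0, hlθ₀, by linarith, hσe, hθ₁, hθ₁σ.trans hσe,
    hβmaps.mono_left (Icc_subset_Icc_right (min_le_right _ _)), hθ₁maps, ⟨m, hm1, ?_⟩,
    by rw [← image_comp]; exact hcov⟩
  rintro _ ⟨x, hx, rfl⟩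
  exact ⟨(hσmaps ⟨hl0.le.trans hx.1, hx.2⟩).1, (him ▸ mem_image_of_mem g hx).2⟩

/-! ### Blokh's theorem -/

/-- The gadgets at the two ends live in `[0, e]` and `[1 - e, 1]` and do not interact. -/
lemma IntervalMixing.nonempty_shadowingScheme_of_gadgets (hmix : IntervalMixing g)
    (hg : Continuous g) {e : ℝ} (he : 0 < e) (he' : e ≤ 1 / 32)
    (h0 : IsAccessible g 0 ∨ ∃ θ l, LeftGadget g e θ l)
    (h1 : IsAccessible g 1 ∨ ∃ θ l, RightGadget g e θ l) : Nonempty (ShadowingScheme g e) := by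
  -- an accessible end gets an empty region `[0, θ₀]`, resp. `[1 - θ₁, 1]`
  obtain ⟨θ₀, l₀, hl₀, h0⟩ : ∃ θ l, 0 < l ∧ ((θ < 0 ∧ IsAccessible g 0) ∨ LeftGadget g e θ l) := by
    rcases h0 with h | ⟨θ, l, h⟩
    exacts [⟨-1, e, he, Or.inl ⟨by norm_num, h⟩⟩, ⟨θ, l, h.1, Or.inr h⟩]
  obtain ⟨θ₁, l₁, hl₁, h1⟩ : ∃ θ l, 0 < l ∧ ((θ < 0 ∧ IsAccessible g 1) ∨ RightGadget g e θ l) := by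
    rcases h1 with h | ⟨θ, l, h⟩
    exacts [⟨-1, e, he, Or.inl ⟨by norm_num, h⟩⟩, ⟨θ, l, h.1, Or.inr h⟩]
  have hG₀ : ∀ x ∈ Icc 0 θ₀, LeftGadget g e θ₀ l₀ := fun x hx =>
    h0.resolve_left fun h => by linarith [hx.1, hx.2, h.1]
  have hG₁ : ∀ x ∈ Icc (1 - θ₁) 1, RightGadget g e θ₁ l₁ := fun x hx =>
    h1.resolve_left fun h => by linarith [hx.1, hx.2, h.1]
  set τ := min e (min l₀ l₁)
  have hτ : 0 < τ := lt_min he (lt_min hl₀ hl₁)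
  have hτe : τ ≤ e := min_le_left _ _
  have hτl₀ : τ ≤ l₀ := (min_le_right _ _).trans (min_le_left _ _)
  have hτl₁ : τ ≤ l₁ := (min_le_right _ _).trans (min_le_right _ _)
  obtain ⟨lo, hi, N, hlo0, hloτ, hhiτ, hhi1, hlo, hhi, hcov⟩ :=
    hmix.exists_covered_Icc hg (half_pos he) hτ (by linarith)
  set K : ℝ → Set ℝ := fun x => if x ≤ 1 / 2 then Icc l₀ e else Icc (1 - e) (1 - l₁)
  have hK₀ : ∀ x ∈ Icc 0 θ₀, K x = Icc l₀ e := fun x hx =>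
    if_pos (by linarith [hx.2, (hG₀ x hx).2.2.1])
  have hK₁ : ∀ x ∈ Icc (1 - θ₁) 1, K x = Icc (1 - e) (1 - l₁) := fun x hx =>
    if_neg (by linarith [hx.1, (hG₁ x hx).2.2.1])
  have hK : ∀ x ∈ Icc 0 θ₀ ∪ Icc (1 - θ₁) 1, IsIcc (K x) ∧ K x ⊆ Icc lo hi ∧
      K x ⊆ Icc (x - e) (x + e) ∧ IsSeed g (e / 2) (K x) := by
    rintro x (hx | hx)
    · obtain ⟨-, hlθ, hθe, -⟩ := hG₀ x hx
      rw [hK₀ x hx]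
      exact ⟨isIcc_Icc (by linarith), Icc_subset_Icc (by linarith) (by linarith),
        Icc_subset_Icc (by linarith [hx.2]) (by linarith [hx.1]),
        isSeed_Icc hl₀.le (by linarith) (by linarith)⟩
    · obtain ⟨-, hlθ, hθe, -⟩ := hG₁ x hx
      rw [hK₁ x hx]
      exact ⟨isIcc_Icc (by linarith), Icc_subset_Icc (by linarith) (by linarith),
        Icc_subset_Icc (by linarith [hx.2]) (by linarith [hx.1]),
        isSeed_Icc (by linarith) (by linarith) (by linarith)⟩
  refine ⟨{ lo := lo, hi := hi, δ := e / 2, N := N, region := Icc 0 θ₀ ∪ Icc (1 - θ₁) 1, K := K,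
            δ_pos := half_pos he, δ_le := half_le_self he.le, zero_le_lo := hlo0,
            lo_add_δ_le := by linarith, hi_le_one := hhi1, covers := hcov,
            isIcc_K := fun x hx => (hK x hx).1, K_subset := fun x hx => (hK x hx).2.1,
            K_subset_Icc := fun x hx => (hK x hx).2.2.1, isSeed_K := fun x hx => (hK x hx).2.2.2,
            K_subset_image := ?image, mem_image_K := ?mem_image, mem_Icc := ?mem }⟩
  case image =>
    rintro x (hx | hx) (hgx | hgx)
    · rw [hK₀ x hx, hK₀ _ hgx]; exact (hG₀ x hx).2.2.2.2
    · linarith [((hG₀ x hx).2.2.2.1 hx).2, hgx.1, (hG₁ _ hgx).2.2.1]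
    · linarith [((hG₁ x hx).2.2.2.1 hx).1, hgx.2, (hG₀ _ hgx).2.2.1]
    · rw [hK₁ x hx, hK₁ _ hgx]; exact (hG₁ x hx).2.2.2.2
  case mem_image =>
    rintro x (hx | hx) hgx
    · obtain ⟨-, hlθ, -, hmaps, hcov⟩ := hG₀ x hx
      rw [hK₀ x hx]
      exact hcov ⟨hlθ.trans (not_le.1 fun h => hgx (Or.inl ⟨(hmaps hx).1, h⟩)).le, (hmaps hx).2⟩
    · obtain ⟨-, hlθ, -, hmaps, hcov⟩ := hG₁ x hx
      rw [hK₁ x hx]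
      refine hcov ⟨(hmaps hx).1, ?_⟩
      linarith [not_le.1 fun h => hgx (Or.inr ⟨h, (hmaps hx).2⟩)]
  case mem =>
    intro y hy hyr
    refine ⟨?_, ?_⟩
    · rcases h0 with ⟨-, hacc⟩ | ⟨-, hlθ, -⟩
      · exact hlo hacc ▸ hy.1
      · linarith [not_le.1 fun h => hyr (Or.inl ⟨hy.1, h⟩)]
    · rcases h1 with ⟨-, hacc⟩ | ⟨-, hlθ, -⟩
      · exact hhi hacc ▸ hy.2
      · linarith [not_le.1 fun h => hyr (Or.inr ⟨h, hy.2⟩)]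

lemma IntervalMixing.nonempty_shadowingScheme_of_swapGadget (hmix : IntervalMixing g)
    (hg : Continuous g) {e θ₀ θ₁ σ l : ℝ} (he' : e ≤ 1 / 32) (hG : SwapGadget g e θ₀ θ₁ σ l) :
    Nonempty (ShadowingScheme g e) := by
  obtain ⟨hl, hlθ₀, hθ₀σ, hσe, hθ₁, hθ₁e, hmaps₀, hmaps₁, ⟨m, hm1, hKm⟩, hcov⟩ := hG
  have hlσ : l ≤ σ := by linarith
  have hm : 1 - e ≤ m := by
    obtain ⟨y, hy⟩ := (nonempty_Icc.2 hlσ).image g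
    exact (hKm hy).1.trans (hKm hy).2
  set τ := min (min l (1 - m)) θ₁
  have hτ : 0 < τ := lt_min (lt_min hl (by linarith)) hθ₁
  have hτl : τ ≤ l := (min_le_left _ _).trans (min_le_left _ _)
  have hτm : τ ≤ 1 - m := (min_le_left _ _).trans (min_le_right _ _)
  have hτθ₁ : τ ≤ θ₁ := min_le_right _ _
  obtain ⟨lo, hi, N, hlo0, hloτ, hhiτ, hhi1, -, -, hcovers⟩ :=
    hmix.exists_covered_Icc hg (by linarith : 0 < σ / 2) hτ (by linarith)
  set K : ℝ → Set ℝ := fun x => if x ≤ 1 / 2 then Icc l σ else g '' Icc l σ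
  have hK₀ : ∀ x ∈ Icc 0 θ₀, K x = Icc l σ := fun x hx => if_pos (by linarith [hx.2])
  have hK₁ : ∀ x ∈ Icc (1 - θ₁) 1, K x = g '' Icc l σ := fun x hx => if_neg (by linarith [hx.1])
  have hK : ∀ x ∈ Icc 0 θ₀ ∪ Icc (1 - θ₁) 1, IsIcc (K x) ∧ K x ⊆ Icc lo hi ∧
      K x ⊆ Icc (x - e) (x + e) ∧ IsSeed g (σ / 2) (K x) := by
    rintro x (hx | hx)
    · rw [hK₀ x hx]
      exact ⟨isIcc_Icc hlσ, Icc_subset_Icc (by linarith) (by linarith),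
        Icc_subset_Icc (by linarith [hx.2]) (by linarith [hx.1]),
        isSeed_Icc hl.le (by linarith) (by linarith)⟩
    · rw [hK₁ x hx]
      exact ⟨(isIcc_Icc hlσ).image hg, hKm.trans (Icc_subset_Icc (by linarith) (by linarith)),
        hKm.trans (Icc_subset_Icc (by linarith [hx.2]) (by linarith [hx.1])),
        (isSeed_Icc hl.le (by linarith) (by linarith)).image⟩
  refine ⟨{ lo := lo, hi := hi, δ := σ / 2, N := N, region := Icc 0 θ₀ ∪ Icc (1 - θ₁) 1,
            K := K, δ_pos := by linarith, δ_le := by linarith, zero_le_lo := hlo0,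
            lo_add_δ_le := by linarith, hi_le_one := hhi1, covers := hcovers,
            isIcc_K := fun x hx => (hK x hx).1, K_subset := fun x hx => (hK x hx).2.1,
            K_subset_Icc := fun x hx => (hK x hx).2.2.1, isSeed_K := fun x hx => (hK x hx).2.2.2,
            K_subset_image := ?image, mem_image_K := ?mem_image, mem_Icc := ?mem }⟩
  case image =>
    rintro x (hx | hx) (hgx | hgx)
    · linarith [(hmaps₀ hx).1, hgx.2]
    · rw [hK₀ x hx, hK₁ _ hgx]
    · rw [hK₁ x hx, hK₀ _ hgx]; exact hcov
    · linarith [(hmaps₁ hx).2, hgx.1]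
  case mem_image =>
    rintro x (hx | hx) hgx
    · exact absurd (Or.inr (hmaps₀ hx)) hgx
    · rw [hK₁ x hx]
      exact hcov ⟨hlθ₀.trans (not_le.1 fun h => hgx (Or.inl ⟨(hmaps₁ hx).1, h⟩)).le,
        (hmaps₁ hx).2⟩
  case mem =>
    intro y hy hyr
    exact ⟨by linarith [not_le.1 fun h => hyr (Or.inl ⟨hy.1, h⟩)],
      by linarith [not_le.1 fun h => hyr (Or.inr ⟨h, hy.2⟩)]⟩

theorem IntervalMixing.nonempty_shadowingScheme (hmix : IntervalMixing g) (hg : Continuous g)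
    (hm : MapsTo g (Icc 0 1) (Icc 0 1)) (hs : SurjOn g (Icc 0 1) (Icc 0 1)) {e : ℝ}
    (he : 0 < e) (he' : e ≤ 1 / 32) : Nonempty (ShadowingScheme g e) := by
  rcases isSwap_or_isAccessible_or_isTotallyInvariant hs with hsw | ⟨h0, h1⟩
  · obtain ⟨θ₀, θ₁, σ, l, hG⟩ := hmix.exists_swapGadget hg hm hs hsw he (by linarith)
    exact hmix.nonempty_shadowingScheme_of_swapGadget hg he' hG
  · exact hmix.nonempty_shadowingScheme_of_gadgets hg he he'
      (h0.imp_right fun h => hmix.exists_leftGadget hg hm hs h he (by linarith))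
      (h1.imp_right fun h => hmix.exists_rightGadget hg hm hs h he (by linarith))

theorem IntervalMixing.exists_isPeriodicPt_shadowing (hmix : IntervalMixing g)
    (hg : Continuous g) (hm : MapsTo g (Icc 0 1) (Icc 0 1)) (hs : SurjOn g (Icc 0 1) (Icc 0 1))
    {ε : ℝ} (hε : 0 < ε) (hε' : ε ≤ 1 / 32) :
    ∃ M : ℕ, ∀ (n : ℕ) (o : Fin (n + 1) → ℕ → ℝ) (a b : Fin (n + 1) → ℕ),
      (∀ i j, o i j ∈ Icc (0 : ℝ) 1) → (∀ i j, g (o i (j + 1)) = o i j) → (∀ i, a i ≤ b i) →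
      (∀ i : Fin n, b i.castSucc + M < a i.succ) → ∀ P : ℕ, M + b (Fin.last n) - a 0 < P →
      ∃ p c, p ∈ Icc (0 : ℝ) 1 ∧ IsPeriodicPt g P p ∧
        ∀ i j, a i ≤ j → j ≤ b i → j ≤ c ∧ g^[c - j] p ∈ Icc (o i j - ε) (o i j + ε) := by
  obtain ⟨S⟩ := hmix.nonempty_shadowingScheme hg hm hs hε hε'
  exact ⟨2 * S.N + 2, S.exists_isPeriodicPt_shadowing hg hm⟩

/-! ### Inverses of self-maps of `[0, 1]` -/

section Extend

/-- A self-map of `[0, 1]` as a map `ℝ → ℝ`, constant outside `[0, 1]`. -/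
noncomputable def extend (f : Icc (0 : ℝ) 1 → Icc (0 : ℝ) 1) : ℝ → ℝ :=
  IccExtend zero_le_one (Subtype.val ∘ f)

variable {f : Icc (0 : ℝ) 1 → Icc (0 : ℝ) 1}

lemma extend_coe (x : Icc (0 : ℝ) 1) : extend f x = f x := IccExtend_val _ _ x

lemma continuous_extend (hf : Continuous f) : Continuous (extend f) :=
  (continuous_subtype_val.comp hf).Icc_extend'

lemma mapsTo_extend : MapsTo (extend f) (Icc 0 1) (Icc 0 1) := fun _ _ => (f _).2

lemma surjOn_extend (hsurj : Surjective f) : SurjOn (extend f) (Icc 0 1) (Icc 0 1) := fun y hy => by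
  obtain ⟨x, hx⟩ := hsurj ⟨y, hy⟩
  exact ⟨x, x.2, by rw [extend_coe, hx]⟩

lemma _root_.IsOrbit.iterate_extend {o : ℕ → Icc (0 : ℝ) 1}
    (ho : IsOrbit (fun x => {y | f y = x}) o) (t : ℕ) : (extend f)^[t] (o t) = o 0 := by
  induction t with
  | zero => rfl
  | succ t ih => rw [iterate_succ_apply, extend_coe, show f (o (t + 1)) = o t from ho t, ih]

lemma intervalMixing_extend_of_mixingSV (h : MixingSV (fun x => {y | f y = x})) :
    IntervalMixing (extend f) := by
  intro l₁ r₁ l₂ r₂ h1 h2 h3 h4 h5 h6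
  have hopen : ∀ l r : ℝ, IsOpen {ξ : Icc (0 : ℝ) 1 | (ξ : ℝ) ∈ Ioo l r} := fun l r =>
    isOpen_Ioo.preimage continuous_subtype_val
  have hne : ∀ l r : ℝ, 0 ≤ l → l < r → r ≤ 1 → {ξ : Icc (0 : ℝ) 1 | (ξ : ℝ) ∈ Ioo l r}.Nonempty :=
    fun l r hl hlr hr => ⟨⟨(l + r) / 2, by constructor <;> linarith⟩, by constructor <;> linarith⟩
  obtain ⟨M, hM⟩ := h _ _ (hopen l₂ r₂) (hopen l₁ r₁) (hne l₂ r₂ h4 h5 h6) (hne l₁ r₁ h1 h2 h3)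
  refine ⟨M + 1, fun n hn => ?_⟩
  obtain ⟨x, hx, o, rfl, ho, hon⟩ := hM n (by omega)
  exact ⟨o n, hon, by rw [ho.iterate_extend]; exact hx⟩

theorem specification_of_intervalMixing_extend (hf : Continuous f) (hsurj : Surjective f)
    (hmix : IntervalMixing (extend f)) : Specification (fun x => {y | f y = x}) := by
  intro ε hε
  obtain ⟨M, hM⟩ := hmix.exists_isPeriodicPt_shadowing (continuous_extend hf) mapsTo_extend
    (surjOn_extend hsurj) (lt_min (half_pos hε) (by norm_num)) (min_le_right (ε / 2) (1 / 32))
  refine ⟨M, fun n o a b ho hab hgap P hP => ?_⟩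
  obtain ⟨p, c, hp, hper, htr⟩ := hM n (fun i j => o i j) a b (fun i j => (o i j).2)
    (fun i j => by rw [extend_coe]; exact congrArg Subtype.val (ho i j)) hab hgap P hP
  obtain ⟨Q, rfl⟩ : ∃ Q, P = Q + 1 := ⟨P - 1, by omega⟩
  have hloop : ∀ k r, (extend f)^[k + (Q + 1) * r] p = (extend f)^[k] p := fun k r => by
    rw [← hper.iterate_mod_apply, Nat.add_mul_mod_self_left, hper.iterate_mod_apply]
  -- the tracing orbit is `j ↦ (extend f)^[c - j] p`, with `c - j` taken modulo the period
  -- `Q + 1` to avoid truncated subtraction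
  refine ⟨fun j => ⟨(extend f)^[c + j * Q] p, mapsTo_extend.iterate _ hp⟩, fun j => ?_, ?_,
    fun i j hj hj' => ?_⟩
  · have := hloop (c + j * Q) 1
    rw [show c + j * Q + (Q + 1) * 1 = c + (j + 1) * Q + 1 by ring, iterate_succ_apply'] at this
    exact Subtype.ext ((extend_coe _).symm.trans this)
  · exact Subtype.ext (by simpa using hloop c Q)
  · obtain ⟨hjc, hmem⟩ := htr i j hj hj'
    show |(extend f)^[c + j * Q] p - o i j| < ε
    rw [show c + j * Q = c - j + (Q + 1) * j by zify [hjc]; ring, hloop]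
    have hε' : min (ε / 2) (1 / 32) < ε := (min_le_left _ _).trans_lt (half_lt_self hε)
    exact abs_sub_lt_iff.2 ⟨by linarith [hmem.2], by linarith [hmem.1]⟩

end Extend

end IntervalMap

/-- for the set-valued inverse `F = f⁻¹` of a continuous surjection
`f : [0,1] → [0,1]`, topological mixing is equivalent to the specification property. -/
theorem inverse_interval_map_mixing_iff_specification
    (f : Set.Icc (0 : ℝ) 1 → Set.Icc (0 : ℝ) 1)
    (hf : Continuous f) (hsurj : Function.Surjective f)
    (F : Set.Icc (0 : ℝ) 1 → Set (Set.Icc (0 : ℝ) 1))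
    (hF : ∀ x, F x = {y | f y = x}) :
    MixingSV F ↔ Specification F := by
  obtain rfl : F = fun x => {y | f y = x} := funext hF
  exact ⟨fun h => IntervalMap.specification_of_intervalMixing_extend hf hsurj
      (IntervalMap.intervalMixing_extend_of_mixingSV h),
    mixingSV_of_specification (fun x => hsurj x) fun y => ⟨f y, rfl⟩⟩
end

section
/- Let X be a compact metric space and F : X → 2^X a set-valued mapping. In the space of F-invariant Borel probability measures on X (with the weak* topology), the subset of measures with full support (support equal to X) is either empty or a dense G_δ set. -/
/-!
Full support is the intersection, over a countable base, of the conditions `0 < μ U`; each is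
open in the weak topology because `μ ↦ μ U` is lower semicontinuous for open `U` (portmanteau).
Invariance is preserved by convex combinations, so if `p` is invariant with full support, every
invariant `ν` is the limit as `t → 0` of the invariant, fully supported `(1 - t) ν + t p`.
-/

open MeasureTheory

/-- `μ` is `F`-invariant (Aubin–Frankowska–Lasota): `μ(B) ≤ μ(F⁻¹(B))` for Borel `B`,
where `F⁻¹(B) = {y : F(y) ∩ B ≠ ∅}`. -/
def SVInvariant {X : Type*} [MeasurableSpace X] (F : X → Set X) (μ : Measure X) : Prop :=
  ∀ B : Set X, MeasurableSet B → μ B ≤ μ {y : X | (F y ∩ B).Nonempty}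

open Filter Topology TopologicalSpace unitInterval BoundedContinuousFunction
open scoped ENNReal

theorem TopologicalSpace.IsTopologicalBasis.isOpenPosMeasure_iff {X : Type*} [TopologicalSpace X]
    [MeasurableSpace X] {B : Set (Set X)} (hB : IsTopologicalBasis B) {μ : Measure X} :
    μ.IsOpenPosMeasure ↔ ∀ U ∈ B, U.Nonempty → μ U ≠ 0 := by
  refine ⟨fun _ U hU hne ↦ (hB.isOpen hU).measure_ne_zero μ hne, fun h ↦ ⟨fun U hU ⟨x, hx⟩ ↦ ?_⟩⟩
  obtain ⟨V, hVB, hxV, hVU⟩ := hB.exists_subset_of_mem_open hx hU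
  exact fun hU0 ↦ h V hVB ⟨x, hxV⟩ (measure_mono_null hVU hU0)

namespace MeasureTheory.ProbabilityMeasure

variable {Ω : Type*} [MeasurableSpace Ω]

noncomputable def mix (t : I) (μ ν : ProbabilityMeasure Ω) : ProbabilityMeasure Ω :=
  ⟨(toNNReal (σ t) : ℝ≥0∞) • (μ : Measure Ω) + (toNNReal t : ℝ≥0∞) • (ν : Measure Ω),
    ⟨by simp [← ENNReal.coe_add]⟩⟩

@[simp]
lemma toMeasure_mix (t : I) (μ ν : ProbabilityMeasure Ω) :
    (mix t μ ν : Measure Ω) =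
      (toNNReal (σ t) : ℝ≥0∞) • (μ : Measure Ω) + (toNNReal t : ℝ≥0∞) • (ν : Measure Ω) :=
  rfl

@[simp]
lemma mix_zero (μ ν : ProbabilityMeasure Ω) : mix 0 μ ν = μ := by
  ext1; simp

lemma integral_mix [TopologicalSpace Ω] [OpensMeasurableSpace Ω] (t : I)
    (μ ν : ProbabilityMeasure Ω) (f : Ω →ᵇ ℝ) :
    ∫ x, f x ∂(mix t μ ν) = (1 - (t : ℝ)) * ∫ x, f x ∂μ + t * ∫ x, f x ∂ν := by
  rw [toMeasure_mix, integral_add_measure, integral_smul_measure, integral_smul_measure]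
  · simp
  · exact (f.integrable _).smul_measure ENNReal.coe_ne_top
  · exact (f.integrable _).smul_measure ENNReal.coe_ne_top

lemma continuous_mix [TopologicalSpace Ω] [OpensMeasurableSpace Ω] (μ ν : ProbabilityMeasure Ω) :
    Continuous fun t : I ↦ mix t μ ν :=
  continuous_iff_forall_continuous_integral.2 fun f ↦ by simp only [integral_mix]; fun_prop

lemma isOpenPosMeasure_mix [TopologicalSpace Ω] {t : I} (ht : t ≠ 0) (μ ν : ProbabilityMeasure Ω)
    [(ν : Measure Ω).IsOpenPosMeasure] : (mix t μ ν : Measure Ω).IsOpenPosMeasure := by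
  have : ((toNNReal t : ℝ≥0∞) • (ν : Measure Ω)).IsOpenPosMeasure :=
    Measure.isOpenPosMeasure_smul _
      (ENNReal.coe_ne_zero.2 fun h ↦ ht (Subtype.ext (congrArg NNReal.toReal h)))
  exact (Measure.le_add_left le_rfl).isOpenPosMeasure

lemma lowerSemicontinuous_measure_of_isOpen [TopologicalSpace Ω] [OpensMeasurableSpace Ω]
    [HasOuterApproxClosed Ω] {U : Set Ω} (hU : IsOpen U) :
    LowerSemicontinuous fun μ : ProbabilityMeasure Ω ↦ (μ : Measure Ω) U :=
  lowerSemicontinuous_iff_le_liminf.2 fun _ ↦ le_liminf_measure_open_of_tendsto tendsto_id hU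

theorem dense_setOf_isOpenPosMeasure_of_mix_mem [TopologicalSpace Ω] [OpensMeasurableSpace Ω]
    {C : ProbabilityMeasure Ω → Prop} (hC : ∀ t μ ν, C μ → C ν → C (mix t μ ν))
    {p : ProbabilityMeasure Ω} (hp : C p) [hp_pos : (p : Measure Ω).IsOpenPosMeasure] :
    Dense {μ : {μ // C μ} | (μ.1 : Measure Ω).IsOpenPosMeasure} := by
  intro ν
  let path : I → {μ // C μ} := fun t ↦ ⟨mix t ν p, hC t _ _ ν.2 hp⟩
  have path_zero : path 0 = ν := Subtype.ext (mix_zero _ _)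
  have path_tendsto : Tendsto path (𝓝[≠] 0) (𝓝 ν) :=
    path_zero ▸ ((continuous_mix ν.1 p).subtype_mk _).continuousAt.tendsto.mono_left
      nhdsWithin_le_nhds
  exact mem_closure_of_tendsto path_tendsto
    (eventually_nhdsWithin_of_forall fun t ht ↦ isOpenPosMeasure_mix ht ν.1 p)

theorem isGδ_setOf_isOpenPosMeasure [TopologicalSpace Ω] [OpensMeasurableSpace Ω]
    [HasOuterApproxClosed Ω] [SecondCountableTopology Ω] :
    IsGδ {μ : ProbabilityMeasure Ω | (μ : Measure Ω).IsOpenPosMeasure} := by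
  let B := {U ∈ countableBasis Ω | U.Nonempty}
  have hB : {μ : ProbabilityMeasure Ω | (μ : Measure Ω).IsOpenPosMeasure} =
      ⋂ U ∈ B, {μ : ProbabilityMeasure Ω | 0 < (μ : Measure Ω) U} := by
    ext μ
    simp only [Set.mem_ofPred_eq, Set.mem_iInter, (isBasis_countableBasis Ω).isOpenPosMeasure_iff,
      pos_iff_ne_zero, B]
    exact ⟨fun h U hU ↦ h U hU.1 hU.2, fun h U hU hne ↦ h U ⟨hU, hne⟩⟩
  rw [hB]
  exact .biInter ((countable_countableBasis Ω).mono (Set.sep_subset _ _)) fun U hU ↦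
    ((lowerSemicontinuous_measure_of_isOpen
      (isOpen_of_mem_countableBasis hU.1)).isOpen_preimage 0).isGδ

end MeasureTheory.ProbabilityMeasure

theorem SVInvariant.add {X : Type*} [MeasurableSpace X] {F : X → Set X} {μ ν : Measure X}
    (hμ : SVInvariant F μ) (hν : SVInvariant F ν) : SVInvariant F (μ + ν) :=
  fun B hB ↦ add_le_add (hμ B hB) (hν B hB)

theorem SVInvariant.smul {X : Type*} [MeasurableSpace X] {F : X → Set X} {μ : Measure X}
    (hμ : SVInvariant F μ) (c : ℝ≥0∞) : SVInvariant F (c • μ) :=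
  fun B hB ↦ mul_le_mul_right (hμ B hB) c

theorem SVInvariant.mix {X : Type*} [MeasurableSpace X] {F : X → Set X}
    {μ ν : ProbabilityMeasure X} (t : I) (hμ : SVInvariant F μ) (hν : SVInvariant F ν) :
    SVInvariant F (μ.mix t ν) :=
  (hμ.smul _).add (hν.smul _)

theorem full_support_invariant_measures_empty_or_dense_Gdelta_general
    {X : Type*} [MetricSpace X] [CompactSpace X] [MeasurableSpace X] [BorelSpace X]
    (F : X → Set X) :
    ({μ : {μ : ProbabilityMeasure X // SVInvariant F μ.toMeasure} |
        ∀ U : Set X, IsOpen U → U.Nonempty → 0 < μ.1.toMeasure U} = ∅) ∨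
    (Dense {μ : {μ : ProbabilityMeasure X // SVInvariant F μ.toMeasure} |
        ∀ U : Set X, IsOpen U → U.Nonempty → 0 < μ.1.toMeasure U} ∧
     IsGδ {μ : {μ : ProbabilityMeasure X // SVInvariant F μ.toMeasure} |
        ∀ U : Set X, IsOpen U → U.Nonempty → 0 < μ.1.toMeasure U}) := by
  have full_support_eq : {μ : {μ : ProbabilityMeasure X // SVInvariant F μ.toMeasure} |
      ∀ U : Set X, IsOpen U → U.Nonempty → 0 < μ.1.toMeasure U} =
      {μ | (μ.1 : Measure X).IsOpenPosMeasure} :=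
    Set.ext fun _ ↦ ⟨fun h ↦ ⟨fun U hU hne ↦ (h U hU hne).ne'⟩,
      fun h U hU hne ↦ pos_iff_ne_zero.2 (h.open_pos U hU hne)⟩
  rw [full_support_eq]
  refine (Set.eq_empty_or_nonempty _).imp id ?_
  rintro ⟨⟨p, hp⟩, hp_pos⟩
  exact ⟨ProbabilityMeasure.dense_setOf_isOpenPosMeasure_of_mix_mem
    (fun t _ _ ↦ SVInvariant.mix t) hp (hp_pos := hp_pos),
    ProbabilityMeasure.isGδ_setOf_isOpenPosMeasure.preimage (f := Subtype.val)
      continuous_subtype_val⟩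

/-- within the space of `F`-invariant Borel probability measures (weak*
topology), the measures of full support form a set which is empty or a dense Gδ. -/
theorem full_support_invariant_measures_empty_or_dense_Gdelta
    {X : Type*} [MetricSpace X] [CompactSpace X] [MeasurableSpace X] [BorelSpace X]
    (F : X → Set X) (hvals : ∀ x, (F x).Nonempty ∧ IsClosed (F x)) :
    ({μ : {μ : ProbabilityMeasure X // SVInvariant F μ.toMeasure} |
        ∀ U : Set X, IsOpen U → U.Nonempty → 0 < μ.1.toMeasure U} = ∅) ∨
    (Dense {μ : {μ : ProbabilityMeasure X // SVInvariant F μ.toMeasure} |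
        ∀ U : Set X, IsOpen U → U.Nonempty → 0 < μ.1.toMeasure U} ∧
     IsGδ {μ : {μ : ProbabilityMeasure X // SVInvariant F μ.toMeasure} |
        ∀ U : Set X, IsOpen U → U.Nonempty → 0 < μ.1.toMeasure U}) :=
  full_support_invariant_measures_empty_or_dense_Gdelta_general F
end

section
/- Let X be a compact metric space and F : X → 2^X a surjective set-valued mapping with the specification property. Then the induced set-valued map γ on lim← F, defined by γ((x_0,x_1,…)) = {(x_{-1},x_0,x_1,…) : x_{-1} ∈ F^{-1}(x_0)} — equivalently, γ is the set-valued inverse of the shift σ — has the specification property. -/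
/-- `γ`, the set-valued inverse of the shift on `lim← F`:
`γ((x_0,x_1,…)) = {(x_{-1},x_0,x_1,…) : x_{-1} ∈ F⁻¹(x_0)}`. -/
def gammaSet {X : Type*} (F : X → Set X) (x : ℕ → X) : Set (ℕ → X) :=
  {y : ℕ → X | x 0 ∈ F (y 0) ∧ ∀ j : ℕ, y (j + 1) = x j}

/-- An orbit of `γ` in `lim← F`. -/
def IsGammaOrbit {X : Type*} (F : X → Set X) (O : ℕ → ℕ → X) : Prop :=
  ∀ k : ℕ, O (k + 1) ∈ gammaSet F (O k)

/-! ### Auxiliary material -/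

/-- The bi-infinite extension of a `γ`-orbit: time `t ∈ ℤ` reads off `O 0 t` for
`t ≥ 0` and `O (-t) 0` for `t < 0`. -/
def extOrbit {X : Type*} (O : ℕ → ℕ → X) (t : ℤ) : X :=
  if 0 ≤ t then O 0 t.toNat else O (-t).toNat 0

lemma gammaOrbit_eq_ext {X : Type*} (F : X → Set X) (O : ℕ → ℕ → X)
    (hG : IsGammaOrbit F O) (k j : ℕ) : O k j = extOrbit O ((j : ℤ) - k) := by
  induction k generalizing j with
  | zero => simp [extOrbit]
  | succ k ih =>
    cases j with
    | zero =>
      have hneg : ¬ (0 ≤ ((0 : ℕ) : ℤ) - ((k + 1 : ℕ) : ℤ)) := by push_cast; omega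
      simp only [extOrbit, if_neg hneg]
      have h2 : (-(((0 : ℕ) : ℤ) - ((k + 1 : ℕ) : ℤ))).toNat = k + 1 := by omega
      rw [h2]
    | succ j =>
      have h1 : O (k + 1) (j + 1) = O k j := (hG k).2 j
      rw [h1, ih]
      congr 1
      push_cast
      ring

lemma extOrbit_isOrbit {X : Type*} (F : X → Set X) (O : ℕ → ℕ → X)
    (h0 : IsOrbit F (O 0)) (hG : IsGammaOrbit F O) (t : ℤ) :
    extOrbit O (t + 1) ∈ F (extOrbit O t) := by
  rcases lt_trichotomy t (-1) with h | h | h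
  · have h1 : ¬ (0 ≤ t + 1) := by omega
    have h2 : ¬ (0 ≤ t) := by omega
    simp only [extOrbit, if_neg h1, if_neg h2]
    have h3 : (-t).toNat = (-(t + 1)).toNat + 1 := by omega
    rw [h3]
    exact (hG (-(t + 1)).toNat).1
  · subst h
    have h1 : extOrbit O (-1 + 1) = O 0 0 := by norm_num [extOrbit]
    have h2 : extOrbit O (-1) = O 1 0 := by norm_num [extOrbit]
    rw [h1, h2]
    exact (hG 0).1
  · have h1 : (0 : ℤ) ≤ t + 1 := by omega
    have h2 : (0 : ℤ) ≤ t := by omega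
    simp only [extOrbit, if_pos h1, if_pos h2]
    have h3 : (t + 1).toNat = t.toNat + 1 := by omega
    rw [h3]
    exact h0 t.toNat

lemma summable_geo_aux (a : ℝ) : Summable (fun n : ℕ => a / 2 ^ (n + 1)) := by
  refine (summable_geometric_two' a).congr fun n => ?_
  rw [div_div, pow_succ, mul_comm]

lemma tsum_geo_aux (a : ℝ) : ∑' n : ℕ, a / 2 ^ (n + 1) = a := by
  calc ∑' n : ℕ, a / 2 ^ (n + 1) = ∑' n : ℕ, a / 2 / 2 ^ n :=
        tsum_congr fun n => by rw [div_div, pow_succ, mul_comm]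
    _ = a := tsum_geometric_two' a

set_option maxHeartbeats 1600000 in
/-- if `F` (surjective) has the specification property, then the induced
set-valued map `γ = σ⁻¹` on `lim← F` (whose points are the orbits of `F`, with metric
`invLimDist`) has the set-valued specification property. -/
theorem gamma_specification {X : Type*} [MetricSpace X] [CompactSpace X]
    (F : X → Set X) (hvals : ∀ x, (F x).Nonempty ∧ IsClosed (F x))
    (hsurj : ∀ y : X, ∃ x : X, y ∈ F x)
    (hspec : Specification F) :
    ∀ ε : ℝ, 0 < ε → ∃ M : ℕ,
      ∀ (n : ℕ) (O : Fin (n + 1) → ℕ → ℕ → X) (a b : Fin (n + 1) → ℕ),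
        (∀ i k, IsOrbit F (O i k)) →
        (∀ i, IsGammaOrbit F (O i)) →
        (∀ i, a i ≤ b i) →
        (∀ i : Fin n, b i.castSucc + M < a i.succ) →
        ∀ P : ℕ, M + b (Fin.last n) - a 0 < P →
          ∃ Z : ℕ → ℕ → X, (∀ k, IsOrbit F (Z k)) ∧ IsGammaOrbit F Z ∧ Z P = Z 0 ∧
            ∀ i : Fin (n + 1), ∀ j : ℕ, a i ≤ j → j ≤ b i →
              invLimDist (Z j) (O i j) < ε := by
  intro ε hε
  -- a uniform bound on distances in the compact space `X`
  obtain ⟨C0, hC0⟩ := Metric.isBounded_iff.mp (isCompact_univ (X := X)).isBounded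
  set C : ℝ := max C0 0 with hCdef
  have hC : ∀ x y : X, dist x y ≤ C := fun x y =>
    le_trans (hC0 (Set.mem_univ x) (Set.mem_univ y)) (le_max_left _ _)
  have hCnn : (0 : ℝ) ≤ C := le_max_right _ _
  have hc1 : (0 : ℝ) < C + 1 := by linarith
  -- choose `N` with `C / 2^(N+1) < ε / 2`
  obtain ⟨N, hN0⟩ := exists_pow_lt_of_lt_one (div_pos (half_pos hε) hc1)
      (by norm_num : (1 / 2 : ℝ) < 1)
  have hN : C / 2 ^ (N + 1) < ε / 2 := by
    have h1 : C / 2 ^ (N + 1) ≤ (C + 1) * (1 / 2 : ℝ) ^ N := by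
      rw [one_div, inv_pow, ← div_eq_mul_inv]
      exact div_le_div₀ hc1.le (by linarith) (by positivity)
        (pow_le_pow_right₀ one_le_two (Nat.le_succ N))
    have h2 : (C + 1) * (1 / 2 : ℝ) ^ N < (C + 1) * (ε / 2 / (C + 1)) :=
      mul_lt_mul_of_pos_left hN0 hc1
    have h3 : (C + 1) * (ε / 2 / (C + 1)) = ε / 2 := by field_simp
    linarith
  obtain ⟨M₀, hM₀⟩ := hspec (ε / 2) (half_pos hε)
  refine ⟨M₀ + N + 1, ?_⟩
  intro n O a b hOrb hGam hab hgap P hP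
  set S := b (Fin.last n) with hS
  have hbmono : StrictMono b := by
    rw [Fin.strictMono_iff_lt_succ]
    intro i
    have := hgap i
    have := hab i.succ
    omega
  have hamono : StrictMono a := by
    rw [Fin.strictMono_iff_lt_succ]
    intro i
    have := hgap i
    have := hab i.castSucc
    omega
  have hbS : ∀ i, b i ≤ S := fun i => hbmono.monotone (Fin.le_last i)
  have haS : ∀ i, a i ≤ S := fun i => le_trans (hab i) (hbS i)
  have ha0 : ∀ i, a 0 ≤ a i := fun i => hamono.monotone (Fin.zero_le i)
  have hrev0 : (0 : Fin (n + 1)).rev = Fin.last n := by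
    rw [← Fin.rev_last, Fin.rev_rev]
  -- hypotheses for the specification property of `F` applied to the reversed,
  -- shifted orbit segments
  have ho : ∀ i : Fin (n + 1), IsOrbit F (fun t => extOrbit (O i.rev) ((t : ℤ) - S)) := by
    intro i t
    simp only
    rw [show ((t + 1 : ℕ) : ℤ) - S = ((t : ℤ) - S) + 1 by push_cast; ring]
    exact extOrbit_isOrbit F (O i.rev) (hOrb i.rev 0) (hGam i.rev) _
  have haab : ∀ i : Fin (n + 1), S - b i.rev ≤ S + N - a i.rev := by
    intro i
    have := hab i.rev
    have := hbS i.rev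
    have := haS i.rev
    omega
  have hgap' : ∀ i : Fin n, (S + N - a (i.castSucc).rev) + M₀ < S - b (i.succ).rev := by
    intro i
    rw [Fin.rev_castSucc, Fin.rev_succ]
    have h1 := hgap i.rev
    have := haS (i.rev.succ)
    have := hbS (i.rev.castSucc)
    omega
  have hp' : M₀ + (S + N - a (Fin.last n).rev) - (S - b (0 : Fin (n + 1)).rev) < P := by
    rw [Fin.rev_last, hrev0]
    have h1 : a 0 ≤ S := haS 0
    omega
  obtain ⟨z, hz, hzP, htr⟩ := hM₀ n (fun i t => extOrbit (O i.rev) ((t : ℤ) - S))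
    (fun i => S - b i.rev) (fun i => S + N - a i.rev) ho haab hgap' P hp'
  have hP1 : 1 ≤ P := by
    have := haS 0
    omega
  have hPZ : (0 : ℤ) < (P : ℤ) := by exact_mod_cast hP1
  -- the periodic bi-infinite orbit
  set G : ℤ → X := fun t => z (((t + (S : ℤ)) % (P : ℤ)).toNat) with hG
  have hGorb : ∀ t : ℤ, G (t + 1) ∈ F (G t) := by
    intro t
    have hm0 : 0 ≤ (t + (S : ℤ)) % P := Int.emod_nonneg _ (by omega)
    have hmP : (t + (S : ℤ)) % P < P := Int.emod_lt_of_pos _ hPZ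
    have hnext : (t + 1 + (S : ℤ)) % P = ((t + (S : ℤ)) % P + 1) % P := by
      rw [show t + 1 + (S : ℤ) = (t + S) + 1 by ring, Int.add_emod (t + (S : ℤ)) 1,
        Int.add_emod ((t + (S : ℤ)) % P) 1, Int.emod_emod_of_dvd _ dvd_rfl]
    by_cases hc : (t + (S : ℤ)) % P + 1 < P
    · have he : ((t + (S : ℤ)) % P + 1) % P = (t + (S : ℤ)) % P + 1 :=
        Int.emod_eq_of_lt (by omega) hc
      simp only [hG]
      rw [hnext, he, show ((t + (S : ℤ)) % P + 1).toNat = ((t + (S : ℤ)) % P).toNat + 1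
        by omega]
      exact hz _
    · have hPe : (t + (S : ℤ)) % P + 1 = P := by omega
      have he : ((t + (S : ℤ)) % P + 1) % P = 0 := by rw [hPe, Int.emod_self]
      simp only [hG]
      rw [hnext, he]
      have h1 : ((t + (S : ℤ)) % P).toNat = P - 1 := by omega
      have h2 := hz (P - 1)
      rw [show P - 1 + 1 = P from by omega] at h2
      rw [h1, Int.toNat_zero, ← hzP]
      exact h2
  -- the tracing estimate in the inverse limit
  have htrace : ∀ i : Fin (n + 1), ∀ j : ℕ, a i ≤ j → j ≤ b i →
      invLimDist (fun m => G ((m : ℤ) - j)) (O i j) < ε := by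
    intro i j hja hjb
    have hjS : j ≤ S := le_trans hjb (hbS i)
    have hQ : ∀ m : ℕ, m ≤ N → dist (G ((m : ℤ) - j)) (O i j m) < ε / 2 := by
      intro m hm
      have hOe : O i j m = extOrbit (O i) ((m : ℤ) - j) :=
        gammaOrbit_eq_ext F (O i) (hGam i) j m
      have ht'P : m + S - j < P := by
        have := ha0 i
        have := haS 0
        omega
      have hGz : G ((m : ℤ) - j) = z (m + S - j) := by
        simp only [hG]
        congr 1
        rw [show (m : ℤ) - j + S = ((m + S - j : ℕ) : ℤ) by omega,
          Int.emod_eq_of_lt (by positivity) (by exact_mod_cast ht'P)]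
        omega
      rw [hGz, hOe]
      have h2 := htr i.rev (m + S - j)
        (by simp only [Fin.rev_rev]; omega)
        (by
          simp only [Fin.rev_rev]
          have := haS i
          omega)
      simp only [Fin.rev_rev] at h2
      rw [show ((m + S - j : ℕ) : ℤ) - S = (m : ℤ) - j by omega] at h2
      exact h2
    show (∑' m : ℕ, dist (G ((m : ℤ) - j)) (O i j m) / 2 ^ (m + 1)) < ε
    have hfC : ∀ m : ℕ, dist (G ((m : ℤ) - j)) (O i j m) / 2 ^ (m + 1) ≤ C / 2 ^ (m + 1) := by
      intro m
      gcongr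
      exact hC _ _
    have hsf : Summable (fun m : ℕ => dist (G ((m : ℤ) - j)) (O i j m) / 2 ^ (m + 1)) :=
      Summable.of_nonneg_of_le (fun m => by positivity) hfC (summable_geo_aux C)
    rw [← Summable.sum_add_tsum_nat_add (N + 1) hsf]
    have hA : ∑ m ∈ Finset.range (N + 1), dist (G ((m : ℤ) - j)) (O i j m) / 2 ^ (m + 1)
        ≤ ε / 2 := by
      have h1 : ∀ m ∈ Finset.range (N + 1),
          dist (G ((m : ℤ) - j)) (O i j m) / 2 ^ (m + 1) ≤ (ε / 2) / 2 ^ (m + 1) := by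
        intro m hm
        have := hQ m (Nat.lt_succ_iff.mp (Finset.mem_range.mp hm))
        gcongr
      calc ∑ m ∈ Finset.range (N + 1), dist (G ((m : ℤ) - j)) (O i j m) / 2 ^ (m + 1)
          ≤ ∑ m ∈ Finset.range (N + 1), (ε / 2) / 2 ^ (m + 1) := Finset.sum_le_sum h1
        _ ≤ ∑' m : ℕ, (ε / 2) / 2 ^ (m + 1) :=
            Summable.sum_le_tsum _ (fun m _ => by positivity) (summable_geo_aux _)
        _ = ε / 2 := tsum_geo_aux _
    have hB : ∑' m : ℕ, dist (G (((m + (N + 1) : ℕ) : ℤ) - j)) (O i j (m + (N + 1)))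
        / 2 ^ (m + (N + 1) + 1) ≤ C / 2 ^ (N + 1) := by
      have h1 : ∀ m : ℕ, dist (G (((m + (N + 1) : ℕ) : ℤ) - j)) (O i j (m + (N + 1)))
          / 2 ^ (m + (N + 1) + 1) ≤ (C / 2 ^ (N + 1)) / 2 ^ (m + 1) := by
        intro m
        have h2 := hfC (m + (N + 1))
        have h3 : (C : ℝ) / 2 ^ (m + (N + 1) + 1) = (C / 2 ^ (N + 1)) / 2 ^ (m + 1) := by
          rw [div_div, ← pow_add, show (N + 1) + (m + 1) = m + (N + 1) + 1 from by omega]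
        rw [← h3]
        exact h2
      calc ∑' m : ℕ, dist (G (((m + (N + 1) : ℕ) : ℤ) - j)) (O i j (m + (N + 1)))
          / 2 ^ (m + (N + 1) + 1)
          ≤ ∑' m : ℕ, (C / 2 ^ (N + 1)) / 2 ^ (m + 1) :=
            Summable.tsum_le_tsum h1 ((summable_nat_add_iff (N + 1)).mpr hsf) (summable_geo_aux _)
        _ = C / 2 ^ (N + 1) := tsum_geo_aux _
    have := add_le_add hA hB
    linarith
  refine ⟨fun k m => G ((m : ℤ) - k), ?_, ?_, ?_, fun i j h1 h2 => htrace i j h1 h2⟩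
  · intro k m
    show G (((m + 1 : ℕ) : ℤ) - k) ∈ F (G ((m : ℤ) - k))
    rw [show ((m + 1 : ℕ) : ℤ) - k = ((m : ℤ) - k) + 1 by push_cast; ring]
    exact hGorb _
  · intro k
    constructor
    · show G (((0 : ℕ) : ℤ) - k) ∈ F (G (((0 : ℕ) : ℤ) - ((k + 1 : ℕ) : ℤ)))
      rw [show ((0 : ℕ) : ℤ) - k = (((0 : ℕ) : ℤ) - ((k + 1 : ℕ) : ℤ)) + 1 by push_cast; ring]
      exact hGorb _
    · intro m
      show G (((m + 1 : ℕ) : ℤ) - ((k + 1 : ℕ) : ℤ)) = G ((m : ℤ) - k)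
      congr 1
      push_cast
      ring
  · funext m
    show G ((m : ℤ) - P) = G ((m : ℤ) - ((0 : ℕ) : ℤ))
    simp only [hG]
    congr 1
    rw [show (m : ℤ) - P + S = ((m : ℤ) - ((0 : ℕ) : ℤ) + S) + P * (-1) by push_cast; ring,
      Int.add_mul_emod_self_left]
end
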